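/- arXiv:1606.07517 — 11 statements merged into one kernel-verified Lean document; each statement's English description precedes it below -/
import Mathlib

section
/- In a coordination game whose underlying directed graph is a DAG, the map sending a joint strategy s to the sequence of payoffs (p_{π(1)}(s), ..., p_{π(n)}(s)), where π is a reverse topological ordering of the nodes (i.e., if i < j then there is no edge π(j) → π(i)), is a generalized ordinal coalitional potential with respect to the lexicographic order on real sequences: every profitable deviation of any coalition strictly increases this sequence lexicographically. -/
open Finset

/-- Payoff in a coordination game on a directed graph (unit weights, zero
bonuses): the number of in-neighbours of `i` that chose the same colour. -/
def payoff {n : ℕ} {C : Type} [DecidableEq C]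
    (E : Fin n → Fin n → Prop) [DecidableRel E]
    (s : Fin n → C) (i : Fin n) : ℕ :=
  (univ.filter (fun j => E j i ∧ s j = s i)).card

/-- `s'` is a profitable deviation (of the coalition on which `s` and `s'`
differ, which must be non-empty) from `s`. -/
def ProfDev {n : ℕ} {C : Type} (p : (Fin n → C) → Fin n → ℕ)
    (s s' : Fin n → C) : Prop :=
  s ≠ s' ∧ ∀ i, s i ≠ s' i → p s i < p s' i

/-- In a coordination game whose underlying directed graph is a DAG, the map
`s ↦ (p_{π 1}(s), …, p_{π n}(s))`, where `π` is a reverse topological ordering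
of the nodes (if `i < j` then there is no edge `π j → π i`), is a generalized
ordinal coalitional potential for the lexicographic order: every profitable
deviation of any coalition lexicographically strictly increases this sequence. -/
theorem dag_generalized_ordinal_c_potential {n : ℕ} {C : Type} [DecidableEq C]
    (E : Fin n → Fin n → Prop) [DecidableRel E]
    (π : Equiv.Perm (Fin n))
    (hπ : ∀ i j : Fin n, i < j → ¬ E (π j) (π i))
    (A : Fin n → Finset C)
    (s s' : Fin n → C) (hs : ∀ i, s i ∈ A i) (hs' : ∀ i, s' i ∈ A i)
    (hdev : ProfDev (payoff E) s s') :
    Pi.Lex (· < ·) (fun a b => a < b)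
      (fun k => payoff E s (π k)) (fun k => payoff E s' (π k)) := by
  classical
  obtain ⟨hne, hlt⟩ := hdev
  set S : Finset (Fin n) := univ.filter (fun k => s (π k) ≠ s' (π k)) with hS
  have hSne : S.Nonempty := by
    by_contra h
    apply hne
    funext i
    by_contra hi
    exact h ⟨π.symm i, by simp [hS, hi]⟩
  set k := S.min' hSne with hk
  have hkS : s (π k) ≠ s' (π k) := by
    have := S.min'_mem hSne
    simpa [hS] using this
  refine ⟨k, ?_, hlt _ hkS⟩
  intro j hj
  have hagree : ∀ l : Fin n, l ≤ j → s (π l) = s' (π l) := by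
    intro l hl
    by_contra hne'
    have : k ≤ l := S.min'_le l (by simp [hS, hne'])
    exact absurd (lt_of_le_of_lt (this.trans hl) hj) (lt_irrefl _)
  show payoff E s (π j) = payoff E s' (π j)
  unfold payoff
  congr 1
  apply Finset.filter_congr
  intro m _
  constructor <;> rintro ⟨hE, heq⟩ <;> refine ⟨hE, ?_⟩
  · have hlj : π.symm m ≤ j := by
      by_contra h
      push_neg at h
      exact hπ j (π.symm m) h (by simpa using hE)
    have hm : s m = s' m := by simpa using hagree (π.symm m) hlj
    rw [← hm, ← hagree j le_rfl, heq]
  · have hlj : π.symm m ≤ j := by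
      by_contra h
      push_neg at h
      exact hπ j (π.symm m) h (by simpa using hE)
    have hm : s m = s' m := by simpa using hagree (π.symm m) hlj
    rw [hm, hagree j le_rfl, heq]
end

section
/- Every coordination game whose underlying directed graph is a DAG has the finite coalitional improvement property (every coalitional improvement path is finite), and hence possesses a strong equilibrium. -/
open Finset

/-- A colouring is valid if every node chooses a colour available to it. -/
def Valid {n : ℕ} {C : Type} (A : Fin n → Finset C) (s : Fin n → C) : Prop :=
  ∀ i, s i ∈ A i

/-- A strong equilibrium: no coalition has a profitable deviation. -/
def StrongEq {n : ℕ} {C : Type} (A : Fin n → Finset C)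
    (p : (Fin n → C) → Fin n → ℕ) (s : Fin n → C) : Prop :=
  ∀ s', Valid A s' → ¬ ProfDev p s s'

/-- A Nash equilibrium: no single player can strictly improve unilaterally. -/
def NashEq {n : ℕ} {C : Type} [DecidableEq C] (A : Fin n → Finset C)
    (p : (Fin n → C) → Fin n → ℕ) (s : Fin n → C) : Prop :=
  ∀ i, ∀ c ∈ A i, p (Function.update s i c) i ≤ p s i

section Aux

variable {n : ℕ} {C : Type}

open scoped Classical in
/-- Number of strict ancestors of `i`. -/
noncomputable def rkAux (E : Fin n → Fin n → Prop) (i : Fin n) : ℕ :=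
  (univ.filter fun j => Relation.TransGen E j i).card

/-- A strict linear order refining the ancestor relation. -/
def precAux (E : Fin n → Fin n → Prop) (i j : Fin n) : Prop :=
  rkAux E i < rkAux E j ∨ (rkAux E i = rkAux E j ∧ i < j)

lemma precAux_irrefl (E : Fin n → Fin n → Prop) (i : Fin n) : ¬ precAux E i i := by
  simp [precAux]

lemma precAux_trans {E : Fin n → Fin n → Prop} {i j k : Fin n}
    (h1 : precAux E i j) (h2 : precAux E j k) : precAux E i k := by
  rcases h1 with h | ⟨h, h'⟩ <;> rcases h2 with g | ⟨g, g'⟩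
  · exact Or.inl (h.trans g)
  · exact Or.inl (g ▸ h)
  · exact Or.inl (h ▸ g)
  · exact Or.inr ⟨h.trans g, h'.trans g'⟩

lemma precAux_total {E : Fin n → Fin n → Prop} {i j : Fin n} (h : i ≠ j) :
    precAux E i j ∨ precAux E j i := by
  rcases lt_trichotomy (rkAux E i) (rkAux E j) with h1 | h1 | h1
  · exact Or.inl (Or.inl h1)
  · rcases lt_or_gt_of_ne h with h2 | h2
    · exact Or.inl (Or.inr ⟨h1, h2⟩)
    · exact Or.inr (Or.inr ⟨h1.symm, h2⟩)
  · exact Or.inr (Or.inl h1)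

lemma precAux_of_E {E : Fin n → Fin n → Prop}
    (hacyc : ∀ i, ¬ Relation.TransGen E i i) {j i : Fin n} (h : E j i) :
    precAux E j i := by
  classical
  left
  unfold rkAux
  apply card_lt_card
  rw [ssubset_iff_of_subset]
  · exact ⟨j, by simp [Relation.TransGen.single h], by simpa using hacyc j⟩
  · intro k hk
    simp only [mem_filter, mem_univ, true_and] at hk ⊢
    exact hk.tail h

open scoped Classical in
/-- Number of strict successors in the linear order: a "reverse position". -/
noncomputable def qvAux (E : Fin n → Fin n → Prop) (i : Fin n) : ℕ :=
  (univ.filter fun k => precAux E i k).card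

lemma qvAux_lt {E : Fin n → Fin n → Prop} {i j : Fin n} (h : precAux E i j) :
    qvAux E j < qvAux E i := by
  classical
  unfold qvAux
  apply card_lt_card
  rw [ssubset_iff_of_subset]
  · refine ⟨j, by simpa using h, by simpa using precAux_irrefl E j⟩
  · intro k hk
    simp only [mem_filter, mem_univ, true_and] at hk ⊢
    exact precAux_trans h hk

lemma qvAux_ne {E : Fin n → Fin n → Prop} {i j : Fin n} (h : i ≠ j) :
    qvAux E i ≠ qvAux E j := by
  rcases precAux_total (E := E) h with hp | hp
  · exact (qvAux_lt hp).ne'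
  · exact (qvAux_lt hp).ne

lemma qvAux_le (E : Fin n → Fin n → Prop) (i : Fin n) : qvAux E i ≤ n := by
  classical
  unfold qvAux
  simpa using card_filter_le (univ : Finset (Fin n)) _

lemma payoff_le [DecidableEq C] (E : Fin n → Fin n → Prop) [DecidableRel E]
    (s : Fin n → C) (i : Fin n) : payoff E s i ≤ n := by
  unfold payoff
  simpa using card_filter_le (univ : Finset (Fin n)) _

lemma payoff_congr [DecidableEq C] (E : Fin n → Fin n → Prop) [DecidableRel E]
    {s s' : Fin n → C} {i : Fin n} (h : ∀ k, E k i → s k = s' k)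
    (hi : s i = s' i) : payoff E s i = payoff E s' i := by
  unfold payoff
  congr 1
  apply filter_congr
  intro k _
  by_cases hk : E k i
  · simp [hk, h k hk, hi]
  · simp [hk]

/-- The potential function: payoffs weighted by `(n+1)^(reverse position)`. -/
noncomputable def potAux [DecidableEq C] (E : Fin n → Fin n → Prop) [DecidableRel E]
    (s : Fin n → C) : ℕ :=
  ∑ i, payoff E s i * (n + 1) ^ (qvAux E i)

lemma geomAux (n : ℕ) : ∀ m : ℕ, n * ∑ t ∈ Finset.range m, (n + 1) ^ t + 1 = (n + 1) ^ m
  | 0 => by simp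
  | m + 1 => by
    rw [Finset.sum_range_succ]
    calc n * (∑ t ∈ Finset.range m, (n + 1) ^ t + (n + 1) ^ m) + 1
        = (n * ∑ t ∈ Finset.range m, (n + 1) ^ t + 1) + n * (n + 1) ^ m := by ring
      _ = (n + 1) ^ m + n * (n + 1) ^ m := by rw [geomAux n m]
      _ = (n + 1) ^ (m + 1) := by ring

lemma potAux_lt [DecidableEq C] {E : Fin n → Fin n → Prop} [DecidableRel E]
    (hacyc : ∀ i, ¬ Relation.TransGen E i i) {s s' : Fin n → C}
    (h : ProfDev (payoff E) s s') : potAux E s < potAux E s' := by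
  classical
  obtain ⟨hne, himp⟩ := h
  obtain ⟨i0, hi0mem, hi0max⟩ := (univ.filter fun i => s i ≠ s' i).exists_max_image
    (qvAux E) (by
      obtain ⟨i, hi⟩ := Function.ne_iff.mp hne
      exact ⟨i, mem_filter.mpr ⟨mem_univ _, hi⟩⟩)
  have hi0 : s i0 ≠ s' i0 := (mem_filter.mp hi0mem).2
  have hmin : ∀ j, s j ≠ s' j → j = i0 ∨ precAux E i0 j := by
    intro j hj
    by_cases hji : j = i0
    · exact Or.inl hji
    · rcases precAux_total (E := E) hji with hp | hp
      · have h1 := qvAux_lt hp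
        have h2 := hi0max j (mem_filter.mpr ⟨mem_univ _, hj⟩)
        omega
      · exact Or.inr hp
  have hNo : ∀ j, precAux E j i0 → s j = s' j := by
    intro j hp
    by_contra hc
    rcases hmin j hc with rfl | hp'
    · exact precAux_irrefl E _ hp
    · exact precAux_irrefl E _ (precAux_trans hp' hp)
  have hLo : ∀ j, precAux E j i0 → payoff E s j = payoff E s' j := by
    intro j hp
    exact payoff_congr E (fun k hk => hNo k (precAux_trans (precAux_of_E hacyc hk) hp)) (hNo j hp)
  have hI0 : payoff E s i0 < payoff E s' i0 := himp i0 hi0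
  set q0 := qvAux E i0 with hq0
  have hsplit : ∀ t : Fin n → C, potAux E t =
      payoff E t i0 * (n + 1) ^ q0 +
      ((∑ j ∈ (univ.erase i0).filter (fun j => precAux E j i0),
          payoff E t j * (n + 1) ^ (qvAux E j)) +
       (∑ j ∈ (univ.erase i0).filter (fun j => ¬ precAux E j i0),
          payoff E t j * (n + 1) ^ (qvAux E j))) := by
    intro t
    rw [potAux, ← Finset.add_sum_erase _ _ (mem_univ i0),
      ← sum_filter_add_sum_filter_not (univ.erase i0) (fun j => precAux E j i0)]
  have hLoEq : (∑ j ∈ (univ.erase i0).filter (fun j => precAux E j i0),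
        payoff E s j * (n + 1) ^ (qvAux E j))
      = ∑ j ∈ (univ.erase i0).filter (fun j => precAux E j i0),
        payoff E s' j * (n + 1) ^ (qvAux E j) := by
    refine sum_congr rfl fun j hj => ?_
    rw [hLo j (mem_filter.mp hj).2]
  set T := (univ.erase i0).filter (fun j => ¬ precAux E j i0) with hT
  have hTlt : ∀ j ∈ T, qvAux E j < q0 := by
    intro j hj
    rw [hT, mem_filter, mem_erase] at hj
    rcases precAux_total (E := E) hj.1.1 with hp | hp
    · exact absurd hp hj.2
    · exact qvAux_lt hp
  have hHiBound : (∑ j ∈ T, payoff E s j * (n + 1) ^ (qvAux E j)) ≤ (n + 1) ^ q0 - 1 := by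
    calc (∑ j ∈ T, payoff E s j * (n + 1) ^ (qvAux E j))
        ≤ ∑ j ∈ T, n * (n + 1) ^ (qvAux E j) :=
          sum_le_sum fun j _ => Nat.mul_le_mul_right _ (payoff_le E s j)
      _ = n * ∑ j ∈ T, (n + 1) ^ (qvAux E j) := by rw [mul_sum]
      _ ≤ n * ∑ t ∈ Finset.range q0, (n + 1) ^ t := by
          apply Nat.mul_le_mul_left
          calc ∑ j ∈ T, (n + 1) ^ (qvAux E j)
              = ∑ t ∈ T.image (qvAux E), (n + 1) ^ t :=
                (sum_image fun x _ y _ hxy => by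
                  by_contra hc; exact qvAux_ne hc hxy).symm
            _ ≤ ∑ t ∈ Finset.range q0, (n + 1) ^ t := by
                apply sum_le_sum_of_subset
                intro t ht
                rw [mem_image] at ht
                obtain ⟨j, hj, rfl⟩ := ht
                exact Finset.mem_range.mpr (hTlt j hj)
      _ = (n + 1) ^ q0 - 1 := Nat.eq_sub_of_add_eq (geomAux n q0)
  rw [hsplit s, hsplit s', hLoEq]
  set L := ∑ j ∈ (univ.erase i0).filter (fun j => precAux E j i0),
    payoff E s' j * (n + 1) ^ (qvAux E j)
  set X := ∑ j ∈ T, payoff E s j * (n + 1) ^ (qvAux E j)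
  set Y := ∑ j ∈ T, payoff E s' j * (n + 1) ^ (qvAux E j)
  have hW : 1 ≤ (n + 1) ^ q0 := Nat.one_le_pow _ _ (by omega)
  have hXW : X < (n + 1) ^ q0 := lt_of_le_of_lt hHiBound (Nat.sub_lt hW one_pos)
  have hPP' : payoff E s i0 * (n + 1) ^ q0 + (n + 1) ^ q0
      ≤ payoff E s' i0 * (n + 1) ^ q0 := by
    have := Nat.mul_le_mul_right ((n + 1) ^ q0) hI0
    calc payoff E s i0 * (n + 1) ^ q0 + (n + 1) ^ q0
        = (payoff E s i0 + 1) * (n + 1) ^ q0 := by ring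
      _ ≤ payoff E s' i0 * (n + 1) ^ q0 := Nat.mul_le_mul_right _ hI0
  calc payoff E s i0 * (n + 1) ^ q0 + (L + X)
      < payoff E s i0 * (n + 1) ^ q0 + (L + ((n + 1) ^ q0 + Y)) := by
        apply Nat.add_lt_add_left
        apply Nat.add_lt_add_left
        exact hXW.trans_le (Nat.le_add_right _ _)
    _ = (payoff E s i0 * (n + 1) ^ q0 + (n + 1) ^ q0) + (L + Y) := by ring
    _ ≤ payoff E s' i0 * (n + 1) ^ q0 + (L + Y) := Nat.add_le_add_right hPP' _

lemma potAux_le [DecidableEq C] (E : Fin n → Fin n → Prop) [DecidableRel E]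
    (s : Fin n → C) : potAux E s ≤ n * (n * (n + 1) ^ n) := by
  calc potAux E s ≤ ∑ _i : Fin n, n * (n + 1) ^ n := by
        refine sum_le_sum fun i _ => Nat.mul_le_mul (payoff_le E s i) ?_
        exact Nat.pow_le_pow_right (by omega) (qvAux_le E i)
    _ = n * (n * (n + 1) ^ n) := by simp [mul_comm]

end Aux

/-- Every coordination game whose underlying directed graph is a DAG has the
finite coalitional improvement property (there is no infinite sequence of
profitable coalitional deviations), and hence possesses a strong equilibrium. -/
theorem dag_cFIP_and_strong_equilibrium {n : ℕ} {C : Type} [DecidableEq C]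
    (E : Fin n → Fin n → Prop) [DecidableRel E]
    (hacyc : ∀ i, ¬ Relation.TransGen E i i)
    (A : Fin n → Finset C) (hA : ∀ i, (A i).Nonempty) :
    (¬ ∃ f : ℕ → (Fin n → C),
        (∀ k, Valid A (f k)) ∧ ∀ k, ProfDev (payoff E) (f k) (f (k + 1))) ∧
    ∃ s, Valid A s ∧ StrongEq A (payoff E) s := by
  constructor
  · rintro ⟨f, _hvalid, hdev⟩
    have hmono : StrictMono (fun k => potAux E (f k)) :=
      strictMono_nat_of_lt_succ fun k => potAux_lt hacyc (hdev k)
    have hb := potAux_le E (f (n * (n * (n + 1) ^ n) + 1))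
    have := hmono.le_apply (x := n * (n * (n + 1) ^ n) + 1)
    omega
  · classical
    obtain ⟨s, hsmem, hmax⟩ := (Fintype.piFinset A).exists_max_image (potAux E)
      (Fintype.piFinset_nonempty.mpr hA)
    refine ⟨s, fun i => (Fintype.mem_piFinset.mp hsmem) i, ?_⟩
    intro s' hv' hdev
    have h1 := potAux_lt hacyc hdev
    have h2 := hmax s' (Fintype.mem_piFinset.mpr hv')
    omega
end

section
/- In a coordination game whose underlying directed graph is a DAG, every Nash equilibrium is a strong equilibrium. -/
open Finset

/-- In a coordination game whose underlying directed graph is a DAG, every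
Nash equilibrium is a strong equilibrium. -/
theorem dag_nash_is_strong {n : ℕ} {C : Type} [DecidableEq C]
    (E : Fin n → Fin n → Prop) [DecidableRel E]
    (hacyc : ∀ i, ¬ Relation.TransGen E i i)
    (A : Fin n → Finset C) (hA : ∀ i, (A i).Nonempty)
    (s : Fin n → C) (hs : Valid A s) (hnash : NashEq A (payoff E) s) :
    StrongEq A (payoff E) s := by
  intro s' hs' ⟨hne, himp⟩
  haveI : IsTrans (Fin n) (Relation.TransGen E) := ⟨fun _ _ _ => Relation.TransGen.trans⟩
  haveI : IsIrrefl (Fin n) (Relation.TransGen E) := ⟨hacyc⟩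
  have hwf : WellFounded (Relation.TransGen E) :=
    Finite.wellFounded_of_trans_of_irrefl _
  have hK : ∃ i, s i ≠ s' i := by
    by_contra h
    push_neg at h
    exact hne (funext h)
  obtain ⟨i, hi, hmin⟩ := hwf.has_min {i | s i ≠ s' i} hK
  have hupd : payoff E (Function.update s i (s' i)) i = payoff E s' i := by
    unfold payoff
    congr 1
    apply Finset.filter_congr
    intro j _
    by_cases hEj : E j i
    · have hji : j ≠ i := fun h => hacyc i (Relation.TransGen.single (h ▸ hEj))
      have hsj : s j = s' j := by
        by_contra h
        exact hmin j h (Relation.TransGen.single hEj)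
      simp [Function.update, hji, hsj]
    · simp [hEj]
  have hlt := himp i hi
  have hle := hnash i (s' i) (hs' i)
  rw [hupd] at hle
  exact absurd (lt_of_lt_of_le hlt hle) (lt_irrefl _)
end

section
/- Every coordination game on a colour complete directed graph (for every colour x, each connected component of the subgraph induced by the nodes having colour x in their colour set is a complete directed graph) is uniform: for every joint strategy s and every edge i → j, if s_i = s_j then p_i(s) = p_j(s). -/
open Finset

/-- Symmetrized adjacency within the subgraph induced by the nodes having
colour `x` available: `i` and `j` both have colour `x` and are joined by an
edge in some direction. -/
def ColourAdj {n : ℕ} {C : Type} (E : Fin n → Fin n → Prop)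
    (A : Fin n → Finset C) (x : C) (i j : Fin n) : Prop :=
  x ∈ A i ∧ x ∈ A j ∧ (E i j ∨ E j i)

/-- Every coordination game on a colour complete directed graph (for every
colour `x`, each connected component of the subgraph induced by
`V_x = {i : x ∈ A i}` is complete, i.e. any two distinct nodes of the
component are joined by edges in both directions) is uniform: for every joint
strategy `s` and every edge `i → j`, if `s i = s j` then `i` and `j` get the
same payoff. -/
theorem colour_complete_uniform {n : ℕ} {C : Type} [DecidableEq C]
    (E : Fin n → Fin n → Prop) [DecidableRel E]
    (hloop : ∀ i, ¬ E i i)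
    (A : Fin n → Finset C)
    (hcc : ∀ (x : C) (i j : Fin n), i ≠ j → x ∈ A i → x ∈ A j →
      Relation.ReflTransGen (ColourAdj E A x) i j → E i j ∧ E j i)
    (s : Fin n → C) (hs : Valid A s)
    (i j : Fin n) (hij : E i j) (hcol : s i = s j) :
    payoff E s i = payoff E s j := by
  classical
  have hne : i ≠ j := fun h => hloop i (h ▸ hij)
  have hxAi : s i ∈ A i := hs i
  have hxAj : s i ∈ A j := hcol ▸ hs j
  have key : ∀ k, k ≠ j → s k = s i → E k i → E k j ∧ E j k := by
    intro k hkj hsk hEki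
    have hAk : s i ∈ A k := hsk ▸ hs k
    exact hcc (s i) k j hkj hAk hxAj
      (Relation.ReflTransGen.head ⟨hAk, hxAi, Or.inl hEki⟩
        (Relation.ReflTransGen.single ⟨hxAi, hxAj, Or.inl hij⟩))
  have key' : ∀ k, k ≠ i → s k = s j → E k j → E k i ∧ E i k := by
    intro k hki hsk hEkj
    have hAk : s i ∈ A k := by rw [hcol]; exact hsk ▸ hs k
    exact hcc (s i) k i hki hAk hxAi
      (Relation.ReflTransGen.head ⟨hAk, hxAj, Or.inl hEkj⟩
        (Relation.ReflTransGen.single ⟨hxAj, hxAi, Or.inr hij⟩))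
  have hji : E j i := (hcc (s i) i j hne hxAi hxAj
    (Relation.ReflTransGen.single ⟨hxAi, hxAj, Or.inl hij⟩)).2
  unfold payoff
  apply Finset.card_bij' (fun k _ => Equiv.swap i j k) (fun k _ => Equiv.swap i j k)
  · intro k hk
    simp only [mem_filter, mem_univ, true_and] at hk ⊢
    obtain ⟨hk1, hk2⟩ := hk
    by_cases hkj : k = j
    · subst hkj
      rw [Equiv.swap_apply_right]
      exact ⟨hij, hcol⟩
    · have hki : k ≠ i := fun h => hloop i (by rwa [h] at hk1)
      rw [Equiv.swap_apply_of_ne_of_ne hki hkj]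
      exact ⟨(key k hkj hk2 hk1).1, hk2.trans hcol⟩
  · intro k hk
    simp only [mem_filter, mem_univ, true_and] at hk ⊢
    obtain ⟨hk1, hk2⟩ := hk
    by_cases hki : k = i
    · subst hki
      rw [Equiv.swap_apply_left]
      exact ⟨hji, hcol.symm⟩
    · have hkj : k ≠ j := fun h => hloop j (by rwa [h] at hk1)
      rw [Equiv.swap_apply_of_ne_of_ne hki hkj]
      exact ⟨(key' k hki hk2 hk1).1, hk2.trans hcol.symm⟩
  · intro k _; simp
  · intro k _; simp
end

section
/- Consider a coordination game on a simple directed cycle 1 → 2 → ... → n → 1 with n ≥ 3 nodes, where all nodes have at least the two colours a and b available. Then this game does not have the finite improvement property: there exists an infinite improvement path (a sequence of joint strategies where each successive one is a profitable unilateral deviation of a single player). -/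
open Finset

/-- Payoff in a coordination game with bonuses on the simple directed cycle
`1 → 2 → ⋯ → n → 1` (nodes modelled as `Fin n`, with `i - 1` the predecessor
of `i` on the cycle): the bonus of `i` for its colour, plus `1` if `i` chose
the same colour as its predecessor. -/
def cycPayoff {n : ℕ} [NeZero n] {C : Type} [DecidableEq C]
    (β : Fin n → C → ℕ) (s : Fin n → C) (i : Fin n) : ℕ :=
  β i (s i) + (if s (i - 1) = s i then 1 else 0)

/-- A single-player profitable deviation: exactly player `i` changes his
strategy and strictly improves. -/
def SingleStep {n : ℕ} {C : Type} (p : (Fin n → C) → Fin n → ℕ)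
    (s s' : Fin n → C) : Prop :=
  ∃ i, (∀ j, j ≠ i → s j = s' j) ∧ s i ≠ s' i ∧ p s i < p s' i

/-! Start from the colouring with a single `b` at node `x`. Its successor `x + 1` gains by copying
`b`; then `x`, whose predecessor `x - 1` is still `a` (here `n ≥ 3` is needed), gains by switching
back to `a`. This leaves a single `b` at `x + 1`, so the block of `b`s travels round the cycle
forever. -/

open Function

lemma SingleStep.of_update {n : ℕ} {C : Type} [DecidableEq C] {p : (Fin n → C) → Fin n → ℕ}
    {s : Fin n → C} {i : Fin n} {c : C} (hc : s i ≠ c) (hp : p s i < p (update s i c) i) :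
    SingleStep p s (update s i c) :=
  ⟨i, fun _ hj => (update_of_ne hj c s).symm, by simpa using hc, hp⟩

lemma Valid.update {n : ℕ} {C : Type} [DecidableEq C] {A : Fin n → Finset C} {s : Fin n → C}
    (hs : Valid A s) {i : Fin n} {c : C} (hc : c ∈ A i) : Valid A (update s i c) := by
  intro j
  rcases eq_or_ne j i with rfl | hj
  · simpa using hc
  · simpa [hj] using hs j

namespace Fin

variable {n : ℕ} [NeZero n]

lemma add_one_ne_self (hn : 2 ≤ n) (x : Fin n) : x + 1 ≠ x := by
  rw [Ne, add_eq_left, Fin.ext_iff, Fin.val_one', Fin.val_zero, Nat.mod_eq_of_lt hn]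
  omega

lemma sub_one_ne_self (hn : 2 ≤ n) (x : Fin n) : x - 1 ≠ x := by
  intro h
  apply add_one_ne_self hn (x - 1)
  rw [sub_add_cancel, h]

lemma sub_one_ne_add_one (hn : 3 ≤ n) (x : Fin n) : x - 1 ≠ x + 1 := by
  rw [Ne, sub_eq_iff_eq_add, add_assoc, left_eq_add, Fin.ext_iff, Fin.val_add, Fin.val_one',
    Nat.mod_eq_of_lt (by omega : 1 < n), Fin.val_zero, Nat.mod_eq_of_lt (by omega : 1 + 1 < n)]
  omega

end Fin

section TravellingBlock

variable {n : ℕ} [NeZero n] {C : Type} [DecidableEq C] (a b : C)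

def travellingBlock : Fin n → ℕ → Fin n → C
  | x, 0 => update (fun _ => a) x b
  | x, 1 => update (update (fun _ => a) x b) (x + 1) b
  | x, m + 2 => travellingBlock (x + 1) m

variable {a b}

lemma valid_travellingBlock {A : Fin n → Finset C} (ha : ∀ i, a ∈ A i) (hb : ∀ i, b ∈ A i) :
    ∀ x m, Valid A (travellingBlock a b x m)
  | x, 0 => Valid.update ha (hb x)
  | x, 1 => (Valid.update ha (hb x)).update (hb (x + 1))
  | x, m + 2 => valid_travellingBlock ha hb (x + 1) m

lemma cycPayoff_zero (s : Fin n → C) (i : Fin n) :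
    cycPayoff (fun _ _ => 0) s i = if s (i - 1) = s i then 1 else 0 :=
  zero_add _

lemma singleStep_travellingBlock (hn : 3 ≤ n) (hab : a ≠ b) :
    ∀ x m, SingleStep (cycPayoff (fun (_ : Fin n) (_ : C) => 0)) (travellingBlock a b x m)
      (travellingBlock a b x (m + 1))
  | x, 0 => by
    have hsucc := Fin.add_one_ne_self (by omega) x
    refine SingleStep.of_update (by simpa [travellingBlock, hsucc] using hab) ?_
    simp [travellingBlock, cycPayoff_zero, hsucc, hsucc.symm, hab.symm]
  | x, 1 => by
    have hsucc := Fin.add_one_ne_self (by omega) x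
    have hpred_succ := Fin.sub_one_ne_add_one hn x
    have hpred := Fin.sub_one_ne_self (by omega) x
    have hback : update (travellingBlock a b x 1) x a = travellingBlock a b x 2 := by
      rw [travellingBlock, update_comm hsucc, update_idem, update_eq_self_iff.mpr rfl]; rfl
    rw [← hback]
    refine SingleStep.of_update (by simpa [travellingBlock, hsucc.symm] using hab.symm) ?_
    simp [travellingBlock, cycPayoff_zero, hsucc.symm, hpred_succ, hpred, hab]
  | x, m + 2 => singleStep_travellingBlock hn hab (x + 1) m

end TravellingBlock

/-- A coordination game on a simple directed cycle with `n ≥ 3` nodes in which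
all nodes have the two colours `a ≠ b` available does not have the finite
improvement property: there is an infinite improvement path, i.e. an infinite
sequence of valid colourings in which each successive colouring is a
profitable unilateral deviation of a single player. (Bonuses are zero, so the
payoff of a node is `1` if it matches its predecessor's colour, else `0`.) -/
theorem cycle_no_FIP {n : ℕ} [NeZero n] (hn : 3 ≤ n)
    {C : Type} [DecidableEq C] (a b : C) (hab : a ≠ b)
    (A : Fin n → Finset C) (ha : ∀ i, a ∈ A i) (hb : ∀ i, b ∈ A i) :
    ∃ f : ℕ → (Fin n → C),
      (∀ k, Valid A (f k)) ∧
      ∀ k, SingleStep (cycPayoff (fun _ _ => 0)) (f k) (f (k + 1)) :=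
  ⟨travellingBlock a b 0, valid_travellingBlock ha hb 0, singleStep_travellingBlock hn hab 0⟩
end

section
/- Every coordination game with bonuses on a simple directed cycle is weakly acyclic: from every initial joint strategy there exists a finite improvement path (of single-player profitable deviations) ending in a Nash equilibrium. Moreover, such a path of length at most 3n exists, where n is the number of nodes. -/
open Finset

section CycAux

variable {n : ℕ} [NeZero n] {C : Type} [DecidableEq C]

/-- The node processed at round `r` of round-robin best-response dynamics. -/
def nodeOf (n : ℕ) [NeZero n] (r : ℕ) : Fin n :=
  ⟨r % n, Nat.mod_lt _ (Nat.pos_of_ne_zero (NeZero.ne n))⟩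

lemma nodeOf_val (r : ℕ) : (nodeOf n r).val = r % n := rfl

lemma nodeOf_add_n (r : ℕ) : nodeOf n (n + r) = nodeOf n r := by
  apply Fin.ext; simp [nodeOf_val, Nat.add_mod_left]

lemma nodeOf_ne {r r' : ℕ} (h1 : r < r') (h2 : r' < r + n) :
    nodeOf n r' ≠ nodeOf n r := by
  intro h
  have hv : r % n = r' % n := (congrArg Fin.val h).symm
  have hd : n ∣ r' - r := (Nat.modEq_iff_dvd' h1.le).mp hv
  have := Nat.le_of_dvd (by omega) hd
  omega

lemma sub_one_ne (hn : 2 ≤ n) (i : Fin n) : i - 1 ≠ i := by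
  intro h
  have h1 : (1 : Fin n) = 0 := sub_eq_self.mp h
  rw [Fin.one_eq_zero_iff] at h1; omega

lemma fin_sub_one_val (hn : 2 ≤ n) (a : Fin n) :
    (a - 1).val = (a.val + (n - 1)) % n := by
  rw [Fin.sub_def]
  show (n - (1 : Fin n).val + a.val) % n = _
  rw [Fin.val_one']
  congr 1
  have : 1 % n = 1 := Nat.mod_eq_of_lt (by omega)
  omega

lemma nodeOf_sub_one (hn : 2 ≤ n) (r0 : ℕ) :
    nodeOf n r0 - 1 = nodeOf n (r0 + n - 1) := by
  apply Fin.ext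
  rw [fin_sub_one_val hn, nodeOf_val, nodeOf_val]
  have h1 : r0 + n - 1 = r0 + (n - 1) := by omega
  rw [h1, Nat.add_mod r0 (n - 1) n, Nat.mod_eq_of_lt (show n - 1 < n by omega)]

variable (A : Fin n → Finset C) (β : Fin n → C → ℕ)

/-- Maximal bonus available to node `i`. -/
noncomputable def Mx (hA : ∀ i, (A i).Nonempty) (i : Fin n) : ℕ :=
  (A i).sup' (hA i) (β i)

/-- A fixed colour of node `i` achieving the maximal bonus. -/
noncomputable def amax (hA : ∀ i, (A i).Nonempty) (i : Fin n) : C :=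
  ((A i).exists_mem_eq_sup' (hA i) (β i)).choose

lemma amax_mem (hA : ∀ i, (A i).Nonempty) (i : Fin n) : amax A β hA i ∈ A i :=
  ((A i).exists_mem_eq_sup' (hA i) (β i)).choose_spec.1

lemma amax_eq (hA : ∀ i, (A i).Nonempty) (i : Fin n) :
    β i (amax A β hA i) = Mx A β hA i :=
  (((A i).exists_mem_eq_sup' (hA i) (β i)).choose_spec.2).symm

lemma le_Mx (hA : ∀ i, (A i).Nonempty) {i : Fin n} {c : C} (hc : c ∈ A i) :
    β i c ≤ Mx A β hA i :=
  Finset.le_sup' (β i) hc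

/-- The payoff of node `i` when it plays `c` and the rest play as in `s`. -/
def gval (s : Fin n → C) (i : Fin n) (c : C) : ℕ :=
  β i c + (if s (i - 1) = c then 1 else 0)

/-- Node `i` is best-responding in `s`. -/
def isBR (s : Fin n → C) (i : Fin n) : Prop :=
  ∀ c ∈ A i, gval β s i c ≤ gval β s i (s i)

/-- The canonical best response: copy the predecessor whenever copying it is
uniquely optimal, otherwise play the fixed bonus-maximising colour. -/
noncomputable def BRc (hA : ∀ i, (A i).Nonempty) (s : Fin n → C) (i : Fin n) : C :=
  if s (i - 1) ∈ A i ∧ β i (s (i - 1)) = Mx A β hA i then s (i - 1) else amax A β hA i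

lemma BRc_mem (hA : ∀ i, (A i).Nonempty) (s : Fin n → C) (i : Fin n) :
    BRc A β hA s i ∈ A i := by
  unfold BRc; split_ifs with h
  · exact h.1
  · exact amax_mem A β hA i

lemma BRc_beta (hA : ∀ i, (A i).Nonempty) (s : Fin n → C) (i : Fin n) :
    β i (BRc A β hA s i) = Mx A β hA i := by
  unfold BRc; split_ifs with h
  · exact h.2
  · exact amax_eq A β hA i

lemma BRc_max (hA : ∀ i, (A i).Nonempty) (s : Fin n → C) (i : Fin n) :
    ∀ c ∈ A i, gval β s i c ≤ gval β s i (BRc A β hA s i) := by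
  intro c hc
  have hcM : β i c ≤ Mx A β hA i := le_Mx A β hA hc
  by_cases hgood : s (i - 1) ∈ A i ∧ β i (s (i - 1)) = Mx A β hA i
  · have hBR : BRc A β hA s i = s (i - 1) := by unfold BRc; rw [if_pos hgood]
    rw [hBR]
    unfold gval
    rw [if_pos rfl, hgood.2]
    split_ifs <;> omega
  · have hBR : BRc A β hA s i = amax A β hA i := by unfold BRc; rw [if_neg hgood]
    rw [hBR]
    unfold gval
    rw [amax_eq A β hA i]
    by_cases hcp : s (i - 1) = c
    · have hne : β i c ≠ Mx A β hA i := by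
        intro h; exact hgood ⟨hcp ▸ hc, hcp ▸ h⟩
      split_ifs <;> omega
    · rw [if_neg hcp]
      split_ifs <;> omega

/-- One round of the dynamics: node `i` moves to its canonical best response
if it is not already best-responding. -/
noncomputable def stepf (hA : ∀ i, (A i).Nonempty) (s : Fin n → C) (i : Fin n) :
    Fin n → C := by
  classical exact if isBR A β s i then s else Function.update s i (BRc A β hA s i)

/-- The round-robin best-response dynamics starting at `s`. -/
noncomputable def iter (hA : ∀ i, (A i).Nonempty) (s : Fin n → C) : ℕ → (Fin n → C)
  | 0 => s
  | r + 1 => stepf A β hA (iter hA s r) (nodeOf n r)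

lemma iter_succ (hA : ∀ i, (A i).Nonempty) (s : Fin n → C) (r : ℕ) :
    iter A β hA s (r + 1) = stepf A β hA (iter A β hA s r) (nodeOf n r) := rfl

lemma payoff_eq (s : Fin n → C) (i : Fin n) :
    cycPayoff β s i = gval β s i (s i) := rfl

lemma payoff_update (hn : 2 ≤ n) (s : Fin n → C) (i : Fin n) (c : C) :
    cycPayoff β (Function.update s i c) i = gval β s i c := by
  unfold cycPayoff gval
  rw [Function.update_self, Function.update_of_ne (sub_one_ne hn i)]

lemma gval_update (hn : 2 ≤ n) (s : Fin n → C) (i : Fin n) (c d : C) :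
    gval β (Function.update s i c) i d = gval β s i d := by
  unfold gval
  rw [Function.update_of_ne (sub_one_ne hn i)]

lemma isBR_congr {s s' : Fin n → C} {i : Fin n} (h1 : s' (i - 1) = s (i - 1))
    (h2 : s' i = s i) (h : isBR A β s i) : isBR A β s' i := by
  intro c hc
  unfold gval
  rw [h1, h2]
  exact h c hc

lemma lt_BRc (hA : ∀ i, (A i).Nonempty) {s : Fin n → C} {i : Fin n}
    (h : ¬ isBR A β s i) :
    gval β s i (s i) < gval β s i (BRc A β hA s i) := by
  unfold isBR at h
  push_neg at h
  obtain ⟨c, hc, hlt⟩ := h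
  exact lt_of_lt_of_le hlt (BRc_max A β hA s i c hc)

lemma BRc_ne (hA : ∀ i, (A i).Nonempty) {s : Fin n → C} {i : Fin n}
    (h : ¬ isBR A β s i) : s i ≠ BRc A β hA s i := by
  intro he
  have := lt_BRc A β hA h
  rw [← he] at this
  omega

lemma isBR_stepf (hn : 2 ≤ n) (hA : ∀ i, (A i).Nonempty) (s : Fin n → C)
    (i : Fin n) : isBR A β (stepf A β hA s i) i := by
  unfold stepf
  split_ifs with h
  · exact h
  · intro c hc
    rw [gval_update β hn, gval_update β hn, Function.update_self]
    exact BRc_max A β hA s i c hc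

lemma stepf_ne (hA : ∀ i, (A i).Nonempty) (s : Fin n → C) {i j : Fin n}
    (h : j ≠ i) : stepf A β hA s i j = s j := by
  unfold stepf
  split_ifs
  · rfl
  · exact Function.update_of_ne h _ _

lemma iter_agree (hA : ∀ i, (A i).Nonempty) (s : Fin n → C) (j : Fin n)
    {r r' : ℕ} (hle : r ≤ r')
    (h : ∀ t, r ≤ t → t < r' → nodeOf n t ≠ j) :
    iter A β hA s r' j = iter A β hA s r j := by
  induction r' , hle using Nat.le_induction with
  | base => rfl
  | succ r' hrr ih =>
    rw [iter_succ, stepf_ne A β hA _ (Ne.symm (h r' hrr (by omega))),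
      ih (fun t ht ht' => h t ht (by omega))]

lemma change_copy (hA : ∀ i, (A i).Nonempty) {s : Fin n → C} {i : Fin n}
    (h : ¬ isBR A β s i) (hM : β i (s i) = Mx A β hA i) :
    BRc A β hA s i = s (i - 1) := by
  unfold isBR at h
  push_neg at h
  obtain ⟨c, hc, hlt⟩ := h
  have h1 : Mx A β hA i ≤ gval β s i (s i) := by
    unfold gval; omega
  have hcM : β i c ≤ Mx A β hA i := le_Mx A β hA hc
  have hcp : s (i - 1) = c := by
    by_contra hne
    unfold gval at hlt
    rw [if_neg hne] at hlt
    omega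
  have hceq : β i c = Mx A β hA i := by
    unfold gval at hlt
    rw [if_pos hcp] at hlt
    omega
  unfold BRc
  rw [if_pos ⟨hcp ▸ hc, hcp ▸ hceq⟩]

lemma iter_valid (hA : ∀ i, (A i).Nonempty) {s : Fin n → C} (hs : Valid A s) :
    ∀ r, Valid A (iter A β hA s r) := by
  intro r
  induction r with
  | zero => exact hs
  | succ r ih =>
    rw [iter_succ]
    unfold stepf
    split_ifs
    · exact ih
    · intro j
      by_cases hj : j = nodeOf n r
      · subst hj; rw [Function.update_self]; exact BRc_mem A β hA _ _
      · rw [Function.update_of_ne hj]; exact ih j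

lemma iter_step (hn : 2 ≤ n) (hA : ∀ i, (A i).Nonempty) (s : Fin n → C) (r : ℕ) :
    iter A β hA s (r + 1) = iter A β hA s r ∨
      SingleStep (cycPayoff β) (iter A β hA s r) (iter A β hA s (r + 1)) := by
  rw [iter_succ]
  unfold stepf
  split_ifs with h
  · exact Or.inl rfl
  · right
    refine ⟨nodeOf n r, fun j hj => (Function.update_of_ne hj _ _).symm, ?_, ?_⟩
    · rw [Function.update_self]
      exact BRc_ne A β hA h
    · rw [payoff_update β hn, payoff_eq]
      exact lt_BRc A β hA h

lemma windowBR (hn : 2 ≤ n) (hA : ∀ i, (A i).Nonempty) (s : Fin n → C) (r0 : ℕ) :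
    ∀ r, r0 < r → r ≤ r0 + n - 1 → isBR A β (iter A β hA s r) (nodeOf n r0) := by
  intro r
  induction r with
  | zero => omega
  | succ r ih =>
    intro h1 h2
    rcases Nat.lt_or_ge r0 r with hr | hr
    · have hb := ih hr (by omega)
      refine isBR_congr A β ?_ ?_ hb
      · rw [iter_succ]
        apply stepf_ne
        rw [nodeOf_sub_one hn]
        exact nodeOf_ne (by omega) (by omega)
      · rw [iter_succ]
        apply stepf_ne
        exact (nodeOf_ne (by omega) (by omega)).symm
    · have : r = r0 := by omega
      subst this
      rw [iter_succ]
      exact isBR_stepf A β hn hA _ _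

lemma allBR_of_noop (hn : 2 ≤ n) (hA : ∀ i, (A i).Nonempty) (s : Fin n → C)
    (R : ℕ) (hR : n ≤ R) (h : isBR A β (iter A β hA s R) (nodeOf n R)) :
    ∀ j, isBR A β (iter A β hA s R) j := by
  intro j
  by_cases hj : j = nodeOf n R
  · subst hj; exact h
  · have hnpos : 0 < n := by omega
    have hmod : R % n < n := Nat.mod_lt _ hnpos
    have hdm : n * (R / n) + R % n = R := Nat.div_add_mod R n
    have hjv : j.val < n := j.isLt
    have hne : j.val ≠ R % n := fun hh => hj (Fin.ext hh)
    have hR1 : 1 ≤ R / n := (Nat.one_le_div_iff hnpos).mpr hR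
    have hmul : n * (R / n - 1) + n = n * (R / n) := by
      have h3 : R / n - 1 + 1 = R / n := by omega
      calc n * (R / n - 1) + n = n * (R / n - 1 + 1) := by ring
        _ = n * (R / n) := by rw [h3]
    set r0 := if R % n < j.val then n * (R / n - 1) + j.val else n * (R / n) + j.val
      with hr0
    have hr0mod : r0 % n = j.val := by
      rw [hr0]
      split_ifs with hc <;>
        rw [Nat.add_comm, Nat.add_mul_mod_self_left, Nat.mod_eq_of_lt hjv]
    have hb : r0 < R ∧ R ≤ r0 + n - 1 := by
      rw [hr0]
      split_ifs with hc <;> constructor <;> omega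
    have hwin := windowBR A β hn hA s r0 R hb.1 hb.2
    have : nodeOf n r0 = j := Fin.ext hr0mod
    rwa [this] at hwin

lemma iter_stable (hA : ∀ i, (A i).Nonempty) (s : Fin n → C) (R : ℕ)
    (h : ∀ j, isBR A β (iter A β hA s R) j) :
    ∀ r, R ≤ r → iter A β hA s r = iter A β hA s R := by
  intro r hr
  induction r, hr using Nat.le_induction with
  | base => rfl
  | succ r hrr ih =>
    rw [iter_succ, ih]
    unfold stepf
    rw [if_pos (h _)]

lemma key (hn : 2 ≤ n) (hA : ∀ i, (A i).Nonempty) (s : Fin n → C) :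
    ∀ j, isBR A β (iter A β hA s (3 * n)) j := by
  suffices h : ∃ R, n ≤ R ∧ R < 3 * n ∧
      isBR A β (iter A β hA s R) (nodeOf n R) by
    obtain ⟨R, h1, h2, h3⟩ := h
    have hall := allBR_of_noop A β hn hA s R h1 h3
    rw [iter_stable A β hA s R hall (3 * n) (by omega)]
    exact hall
  by_contra hno
  push_neg at hno
  -- every round in [n, 3n) is a strict change
  -- after pass 2, the colour of each node maximises its bonus
  have hcol : ∀ v, v < n →
      β (nodeOf n v) (iter A β hA s (n + v + 1) (nodeOf n v)) =
        Mx A β hA (nodeOf n v) := by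
    intro v hv
    have hch := hno (n + v) (by omega) (by omega)
    rw [nodeOf_add_n] at hch
    have : iter A β hA s (n + v + 1) (nodeOf n v) =
        BRc A β hA (iter A β hA s (n + v)) (nodeOf n v) := by
      rw [iter_succ, nodeOf_add_n]
      unfold stepf
      rw [if_neg hch, Function.update_self]
    rw [this]
    exact BRc_beta A β hA _ _
  -- the colour persists into pass 3 (until the node's own pass-3 round)
  have hpers : ∀ v, v < n →
      iter A β hA s (2 * n + v) (nodeOf n v) =
        iter A β hA s (n + v + 1) (nodeOf n v) := by
    intro v hv
    exact iter_agree A β hA s (nodeOf n v) (by omega)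
      (fun t ht ht' => by
        have : nodeOf n t ≠ nodeOf n (n + v) := nodeOf_ne (by omega) (by omega)
        rwa [nodeOf_add_n] at this)
  -- each pass-3 change must copy the predecessor
  have hcopy : ∀ v, v < n →
      iter A β hA s (2 * n + v + 1) (nodeOf n v) =
        iter A β hA s (2 * n + v) (nodeOf n v - 1) := by
    intro v hv
    have hch := hno (2 * n + v) (by omega) (by omega)
    have hnode : nodeOf n (2 * n + v) = nodeOf n v := by
      have h1 : 2 * n + v = n + (n + v) := by omega
      rw [h1, nodeOf_add_n, nodeOf_add_n]
    rw [hnode] at hch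
    have hM : β (nodeOf n v) (iter A β hA s (2 * n + v) (nodeOf n v)) =
        Mx A β hA (nodeOf n v) := by
      rw [hpers v hv]; exact hcol v hv
    have : iter A β hA s (2 * n + v + 1) (nodeOf n v) =
        BRc A β hA (iter A β hA s (2 * n + v)) (nodeOf n v) := by
      rw [iter_succ, hnode]
      unfold stepf
      rw [if_neg hch, Function.update_self]
    rw [this]
    exact change_copy A β hA hch hM
  -- the copied colour propagates around the cycle
  have hchain : ∀ v, v < n →
      iter A β hA s (2 * n + v + 1) (nodeOf n v) =
        iter A β hA s (2 * n) (nodeOf n (n - 1)) := by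
    intro v
    induction v with
    | zero =>
      intro _
      rw [hcopy 0 (by omega), nodeOf_sub_one hn 0]
      have h0 : 0 + n - 1 = n - 1 := by omega
      rw [h0]
      exact iter_agree A β hA s (nodeOf n (n - 1)) (by omega)
        (fun t ht ht' => by omega)
    | succ v ih =>
      intro hv
      rw [hcopy (v + 1) hv]
      have hsub : nodeOf n (v + 1) - 1 = nodeOf n v := by
        rw [nodeOf_sub_one hn (v + 1)]
        have h1 : v + 1 + n - 1 = n + v := by omega
        rw [h1, nodeOf_add_n]
      rw [hsub]
      exact ih (by omega)
  -- contradiction at node n-1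
  have hlast := hchain (n - 1) (by omega)
  have hold : iter A β hA s (2 * n + (n - 1)) (nodeOf n (n - 1)) =
      iter A β hA s (2 * n) (nodeOf n (n - 1)) := by
    refine iter_agree A β hA s (nodeOf n (n - 1)) (by omega) (fun t ht ht' => ?_)
    have h1 : nodeOf n (n - 1) = nodeOf n (2 * n + (n - 1)) := by
      have h2 : 2 * n + (n - 1) = n + (n + (n - 1)) := by omega
      rw [h2, nodeOf_add_n, nodeOf_add_n]
    rw [h1]
    exact (nodeOf_ne (by omega) (by omega)).symm
  have hch := hno (2 * n + (n - 1)) (by omega) (by omega)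
  have hnode : nodeOf n (2 * n + (n - 1)) = nodeOf n (n - 1) := by
    have h2 : 2 * n + (n - 1) = n + (n + (n - 1)) := by omega
    rw [h2, nodeOf_add_n, nodeOf_add_n]
  rw [hnode] at hch
  have hnew : iter A β hA s (2 * n + (n - 1) + 1) (nodeOf n (n - 1)) =
      BRc A β hA (iter A β hA s (2 * n + (n - 1))) (nodeOf n (n - 1)) := by
    rw [iter_succ, hnode]
    unfold stepf
    rw [if_neg hch, Function.update_self]
  have hne := BRc_ne A β hA hch
  rw [← hnew, hlast, ← hold] at hne
  exact hne rfl

end CycAux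

lemma compress {X : Type} (p : X → X → Prop) (g : ℕ → X) :
    ∀ N, (∀ r < N, g (r + 1) = g r ∨ p (g r) (g (r + 1))) →
      ∃ k ≤ N, ∃ f : ℕ → X, f 0 = g 0 ∧ f k = g N ∧ (∀ m, ∃ r ≤ N, f m = g r) ∧
        ∀ m < k, p (f m) (f (m + 1)) := by
  intro N
  induction N with
  | zero =>
    intro _
    exact ⟨0, le_rfl, fun _ => g 0, rfl, rfl, fun m => ⟨0, le_rfl, rfl⟩,
      fun m hm => absurd hm (by omega)⟩
  | succ N ih =>
    intro h
    obtain ⟨k, hk, f, h0, hN, hmem, hstep⟩ := ih (fun r hr => h r (by omega))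
    rcases h N (by omega) with heq | hp
    · refine ⟨k, by omega, f, h0, ?_, ?_, hstep⟩
      · rw [heq]; exact hN
      · intro m; obtain ⟨r, hr, hm⟩ := hmem m; exact ⟨r, by omega, hm⟩
    · refine ⟨k + 1, by omega, fun m => if m ≤ k then f m else g (N + 1),
        by simp [h0], by simp, ?_, ?_⟩
      · intro m
        by_cases hm : m ≤ k
        · obtain ⟨r, hr, hmm⟩ := hmem m
          exact ⟨r, by omega, by simp [hm, hmm]⟩
        · exact ⟨N + 1, le_rfl, by simp [hm]⟩
      · intro m hm
        rcases Nat.lt_or_ge m k with hmk | hmk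
        · simp only [show m ≤ k by omega, if_pos, show m + 1 ≤ k by omega]
          exact hstep m hmk
        · have hmeq : m = k := by omega
          subst hmeq
          simp only [le_rfl, if_pos, show ¬ (m + 1 ≤ m) by omega, if_neg]
          rw [hN]
          exact hp

/-- Every coordination game with bonuses on a simple directed cycle is weakly
acyclic: from every initial valid colouring there is a finite improvement path
(of single-player profitable deviations) of length at most `3n` that ends in a
Nash equilibrium. -/
theorem cycle_weakly_acyclic {n : ℕ} [NeZero n] (hn : 2 ≤ n)
    {C : Type} [DecidableEq C]
    (A : Fin n → Finset C) (hA : ∀ i, (A i).Nonempty)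
    (β : Fin n → C → ℕ)
    (s : Fin n → C) (hs : Valid A s) :
    ∃ k ≤ 3 * n, ∃ f : ℕ → (Fin n → C),
      f 0 = s ∧ (∀ m, Valid A (f m)) ∧
      (∀ m < k, SingleStep (cycPayoff β) (f m) (f (m + 1))) ∧
      NashEq A (cycPayoff β) (f k) := by
  classical
  obtain ⟨k, hk, f, hf0, hfN, hmem, hstep⟩ :=
    compress (SingleStep (cycPayoff β)) (iter A β hA s) (3 * n)
      (fun r _ => iter_step A β hn hA s r)
  refine ⟨k, hk, f, hf0, ?_, hstep, ?_⟩
  · intro m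
    obtain ⟨r, _, hm⟩ := hmem m
    rw [hm]
    exact iter_valid A β hA hs r
  · rw [hfN]
    intro i c hc
    rw [payoff_update β hn, payoff_eq]
    exact key A β hn hA s i c hc
end

section
/- In a coordination game with bonuses on a simple directed cycle with n nodes, every Nash equilibrium is a k-equilibrium for every k ∈ {1, ..., n−1}; that is, no coalition of at most n−1 players has a profitable deviation from a Nash equilibrium. -/
/-! A node's payoff depends only on its own colour and its predecessor's. So if some deviator's
predecessor stays put, that deviator could have secured the same gain alone, which a Nash
equilibrium forbids. Hence the coalition is closed under taking predecessors, and on a cycle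
that makes it the whole node set, of size `n`. -/

open Finset

open Fin.NatCast Fin.CommRing in
theorem Finset.eq_univ_of_sub_one_mem {n : ℕ} [NeZero n] {K : Finset (Fin n)}
    (hK : K.Nonempty) (hclosed : ∀ i ∈ K, i - 1 ∈ K) : K = univ := by
  obtain ⟨k, hk⟩ := hK
  have hsub : ∀ m : ℕ, k - (m : Fin n) ∈ K := by
    intro m
    induction m with
    | zero => simpa using hk
    | succ m ih => simpa [sub_sub] using hclosed _ ih
  refine eq_univ_of_forall fun j => ?_
  simpa [Fin.cast_val_eq_self] using hsub (k - j).val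

theorem cycPayoff_congr {n : ℕ} [NeZero n] {C : Type} [DecidableEq C]
    (β : Fin n → C → ℕ) {s t : Fin n → C} {i : Fin n}
    (hi : s i = t i) (hpred : s (i - 1) = t (i - 1)) :
    cycPayoff β s i = cycPayoff β t i := by
  simp only [cycPayoff, hi, hpred]

theorem NashEq.pred_deviates_of_profDev {n : ℕ} [NeZero n] {C : Type} [DecidableEq C]
    {A : Fin n → Finset C} {β : Fin n → C → ℕ} {s s' : Fin n → C}
    (hnash : NashEq A (cycPayoff β) s) (hs' : Valid A s')
    (hdev : ProfDev (cycPayoff β) s s') {i : Fin n} (hi : s i ≠ s' i) :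
    s (i - 1) ≠ s' (i - 1) := by
  intro hpred
  have hne : i - 1 ≠ i := fun h => hi (h ▸ hpred)
  have hsolo : cycPayoff β (Function.update s i (s' i)) i = cycPayoff β s' i :=
    cycPayoff_congr β (Function.update_self ..) (by rw [Function.update_of_ne hne, hpred])
  have := hnash i (s' i) (hs' i)
  have := hdev.2 i hi
  omega

theorem cycle_nash_is_k_equilibrium_general {n : ℕ} [NeZero n]
    {C : Type} [DecidableEq C]
    (A : Fin n → Finset C)
    (β : Fin n → C → ℕ)
    (s : Fin n → C) (hnash : NashEq A (cycPayoff β) s)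
    (s' : Fin n → C) (hs' : Valid A s')
    (hsize : (univ.filter (fun i => s i ≠ s' i)).card ≤ n - 1) :
    ¬ ProfDev (cycPayoff β) s s' := by
  intro hdev
  have hK : (univ.filter (fun i => s i ≠ s' i)).Nonempty := by
    obtain ⟨k, hk⟩ := Function.ne_iff.mp hdev.1
    exact ⟨k, mem_filter.mpr ⟨mem_univ k, hk⟩⟩
  have huniv := eq_univ_of_sub_one_mem hK fun i hi => by
    simp only [mem_filter, mem_univ, true_and] at hi ⊢
    exact hnash.pred_deviates_of_profDev hs' hdev hi
  rw [huniv, card_univ, Fintype.card_fin] at hsize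
  have := NeZero.pos n
  omega

/-- In a coordination game with bonuses on a simple directed cycle with `n`
nodes, every Nash equilibrium is a `k`-equilibrium for every
`k ∈ {1, …, n-1}`: no coalition of at most `n - 1` players has a profitable
deviation from a Nash equilibrium. -/
theorem cycle_nash_is_k_equilibrium {n : ℕ} [NeZero n] (hn : 2 ≤ n)
    {C : Type} [DecidableEq C]
    (A : Fin n → Finset C) (hA : ∀ i, (A i).Nonempty)
    (β : Fin n → C → ℕ)
    (s : Fin n → C) (hs : Valid A s) (hnash : NashEq A (cycPayoff β) s)
    (s' : Fin n → C) (hs' : Valid A s')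
    (hsize : (univ.filter (fun i => s i ≠ s' i)).card ≤ n - 1) :
    ¬ ProfDev (cycPayoff β) s s' :=
  cycle_nash_is_k_equilibrium_general A β s hnash s' hs' hsize
end

section
/- Every coordination game with bonuses on a simple directed cycle is coalitionally weakly acyclic: from every initial joint strategy there is a finite coalitional improvement path ending in a strong equilibrium. In particular, every such game has a strong equilibrium. -/
open Finset

/-!
Along a profitable coalitional deviation neither the total bonus nor the welfare decreases: a
deviator keeps or raises its bonus and gains at least one, while a non-deviator loses at most the
point it owes to a deviating predecessor. If every node deviates, welfare rises; otherwise some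
deviator follows a non-deviator and can deviate alone. Unless this raises welfare or bonus, it is
a grab: the node takes the colour `c` of its predecessor at equal bonus, moving a colour boundary
one step forward. If some node resists `c` (cannot take it or strictly prefers its own colour),
the boundary approaches the nearest resister, so the sum over boundaries of the distance to the
next resister of the incoming colour drops. If no node resists `c`, repeated grabs spread `c`
along the cycle until welfare or bonus rises. So welfare, total bonus and this boundary potential
form a lexicographic potential, bounded on valid colourings, which some improvement path
decreases from every colouring that is not a strong equilibrium.
-/

open Function Relation
open scoped Fin.CommRing

lemma Fin.one_ne_zero_of_two_le {n : ℕ} [NeZero n] (hn : 2 ≤ n) : (1 : Fin n) ≠ 0 := by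
  rw [Ne, Fin.ext_iff, Fin.val_one', Fin.val_zero, Nat.mod_eq_of_lt hn]
  exact one_ne_zero

lemma Fin.add_one_ne_self_s8 {n : ℕ} [NeZero n] (hn : 2 ≤ n) (i : Fin n) : i + 1 ≠ i := by
  simpa using (add_right_injective i).ne (Fin.one_ne_zero_of_two_le hn)

lemma Fin.sub_one_ne_self_s8 {n : ℕ} [NeZero n] (hn : 2 ≤ n) (i : Fin n) : i - 1 ≠ i :=
  fun h => Fin.add_one_ne_self_s8 hn (i - 1) (by rw [sub_add_cancel, h])

lemma Fin.exists_and_not_sub_one {n : ℕ} [NeZero n] {P : Fin n → Prop} {a b : Fin n}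
    (ha : P a) (hb : ¬ P b) : ∃ i, P i ∧ ¬ P (i - 1) := by
  by_contra! h
  have hback : ∀ k : ℕ, P (a - k) := by
    intro k
    induction k with
    | zero => simpa using ha
    | succ k ih => simpa [sub_add_eq_sub_sub] using h _ ih
  exact hb (by simpa using hback (a - b).val)

lemma sum_add_sum_eq_of_eq_off {ι M : Type*} [Fintype ι] [DecidableEq ι] [AddCommMonoid M]
    {f g : ι → M} (S : Finset ι) (h : ∀ j ∉ S, f j = g j) :
    ∑ j, f j + ∑ j ∈ S, g j = ∑ j, g j + ∑ j ∈ S, f j := by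
  rw [← sum_compl_add_sum S f, ← sum_compl_add_sum S g,
    sum_congr rfl fun j hj => h j (mem_compl.mp hj)]
  abel

lemma profDev_update {n : ℕ} {C : Type} {p : (Fin n → C) → Fin n → ℕ}
    {s : Fin n → C} {i : Fin n} {c : C} (hc : s i ≠ c) (hlt : p s i < p (update s i c) i) :
    ProfDev p s (update s i c) := by
  refine ⟨fun h => hc (by simpa using congrFun h i), fun j hj => ?_⟩
  obtain rfl : j = i := by
    by_contra hji
    exact hj (update_of_ne hji c s).symm
  exact hlt

lemma valid_update {n : ℕ} {C : Type} {A : Fin n → Finset C} {s : Fin n → C}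
    (hs : Valid A s) {i : Fin n} {c : C} (hc : c ∈ A i) : Valid A (update s i c) := by
  intro j
  by_cases hj : j = i
  · subst hj; simpa using hc
  · simpa [hj] using hs j

def totalBonus {n : ℕ} {C : Type} (β : Fin n → C → ℕ) (s : Fin n → C) : ℕ := ∑ i, β i (s i)

lemma totalBonus_le_sum_sup {n : ℕ} {C : Type} {A : Fin n → Finset C} {β : Fin n → C → ℕ}
    {s : Fin n → C} (hs : Valid A s) : totalBonus β s ≤ ∑ i, (A i).sup (β i) :=
  sum_le_sum fun i _ => le_sup (hs i)

section Resisters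

variable {n : ℕ} {C : Type} [DecidableEq C] {A : Fin n → Finset C} {β : Fin n → C → ℕ}
  {s : Fin n → C} {i : Fin n} {c : C}

def resisters (A : Fin n → Finset C) (β : Fin n → C → ℕ) (s : Fin n → C) (c : C) :
    Finset (Fin n) :=
  {f | c ∉ A f ∨ β f c < β f (s f)}

lemma resisters_update (hβ : β i c = β i (s i)) (d : C) :
    resisters A β (update s i c) d = resisters A β s d := by
  ext f
  by_cases hf : f = i
  · subst hf; simp [resisters, hβ]
  · simp [resisters, hf]

end Resisters

section CycleGame

variable {n : ℕ} [NeZero n] {C : Type} [DecidableEq C] {A : Fin n → Finset C}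
  {β : Fin n → C → ℕ} {s s' t : Fin n → C} {i : Fin n} {c : C}

def ImprovementStep (A : Fin n → Finset C) (β : Fin n → C → ℕ) (s t : Fin n → C) : Prop :=
  Valid A t ∧ ProfDev (cycPayoff β) s t

def welfare (β : Fin n → C → ℕ) (s : Fin n → C) : ℕ := ∑ i, cycPayoff β s i

def mismatch (s s' : Fin n → C) (i : Fin n) : ℕ := if s i = s' i then 0 else 1

lemma le_cycPayoff (β : Fin n → C → ℕ) (s : Fin n → C) (i : Fin n) :
    β i (s i) ≤ cycPayoff β s i :=
  Nat.le_add_right _ _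

lemma cycPayoff_le (β : Fin n → C → ℕ) (s : Fin n → C) (i : Fin n) :
    cycPayoff β s i ≤ β i (s i) + 1 := by
  unfold cycPayoff
  split <;> omega

lemma cycPayoff_update_self (hn : 2 ≤ n) :
    cycPayoff β (update s i c) i = β i c + if s (i - 1) = c then 1 else 0 := by
  simp [cycPayoff, Fin.sub_one_ne_self_s8 hn i]

lemma cycPayoff_update_of_sub_one_eq (hn : 2 ≤ n) (h : s (i - 1) = s' (i - 1)) :
    cycPayoff β (update s i (s' i)) i = cycPayoff β s' i := by
  simp [cycPayoff, Fin.sub_one_ne_self_s8 hn i, h]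

lemma cycPayoff_lt_update_of_grab (hn : 2 ≤ n) (hpred : s (i - 1) = c) (hc : s i ≠ c)
    (hβ : β i (s i) ≤ β i c) : cycPayoff β s i < cycPayoff β (update s i c) i := by
  rw [cycPayoff_update_self hn, if_pos hpred, cycPayoff, hpred, if_neg (Ne.symm hc)]
  omega

lemma bonus_le_of_profDev (h : ProfDev (cycPayoff β) s s') (i : Fin n) :
    β i (s i) ≤ β i (s' i) := by
  by_cases hi : s i = s' i
  · rw [hi]
  · have := h.2 i hi
    have := le_cycPayoff β s i
    have := cycPayoff_le β s' i
    omega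

lemma totalBonus_le_of_profDev (h : ProfDev (cycPayoff β) s s') :
    totalBonus β s ≤ totalBonus β s' :=
  sum_le_sum fun i _ => bonus_le_of_profDev h i

lemma bonus_eq_of_totalBonus_eq (h : ProfDev (cycPayoff β) s s')
    (hB : totalBonus β s = totalBonus β s') (i : Fin n) : β i (s i) = β i (s' i) :=
  (sum_eq_sum_iff_of_le fun i _ => bonus_le_of_profDev h i).1 hB i (mem_univ i)

lemma cycPayoff_add_mismatch_le (h : ProfDev (cycPayoff β) s s') (i : Fin n) :
    cycPayoff β s i + mismatch s s' i ≤ cycPayoff β s' i + mismatch s s' (i - 1) := by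
  by_cases hi : s i = s' i
  · by_cases hp : s (i - 1) = s' (i - 1)
    · simp [cycPayoff, mismatch, hi, hp]
    · have := cycPayoff_le β s i
      have := le_cycPayoff β s' i
      simp only [mismatch, hi, hp, if_true, if_false] at *
      omega
  · have := h.2 i hi
    simp only [mismatch, hi, if_false]
    split <;> omega

lemma sum_cycPayoff_add_mismatch_sub_one (s s' : Fin n → C) :
    ∑ i, (cycPayoff β s' i + mismatch s s' (i - 1)) = welfare β s' + ∑ i, mismatch s s' i := by
  have hshift := Equiv.sum_comp (Equiv.subRight (1 : Fin n)) (mismatch s s')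
  simp only [Equiv.subRight_apply] at hshift
  rw [sum_add_distrib, hshift, welfare]

lemma welfare_le_of_profDev (h : ProfDev (cycPayoff β) s s') : welfare β s ≤ welfare β s' := by
  have key := sum_le_sum fun i (_ : i ∈ univ) => cycPayoff_add_mismatch_le h i
  rw [sum_add_distrib, sum_cycPayoff_add_mismatch_sub_one] at key
  exact le_of_add_le_add_right key

lemma cycPayoff_add_mismatch_eq (h : ProfDev (cycPayoff β) s s')
    (hW : welfare β s = welfare β s') (i : Fin n) :
    cycPayoff β s i + mismatch s s' i = cycPayoff β s' i + mismatch s s' (i - 1) := by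
  refine (sum_eq_sum_iff_of_le fun i _ => cycPayoff_add_mismatch_le h i).1 ?_ i (mem_univ i)
  rw [sum_add_distrib, sum_cycPayoff_add_mismatch_sub_one, ← hW, welfare]

lemma flat_update_spec (hn : 2 ≤ n) (hc : s i ≠ c)
    (hlt : cycPayoff β s i < cycPayoff β (update s i c) i)
    (hW : welfare β s = welfare β (update s i c))
    (hB : totalBonus β s = totalBonus β (update s i c)) :
    β i c = β i (s i) ∧ s (i - 1) = c ∧ s (i + 1) = s i ∧ s (i + 1) ≠ c := by
  have hdev := profDev_update hc hlt
  have hβ : β i c = β i (s i) := by simpa using (bonus_eq_of_totalBonus_eq hdev hB i).symm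
  have hpred : s (i - 1) = c := by
    by_contra h
    rw [cycPayoff_update_self hn, if_neg h, cycPayoff, hβ] at hlt
    omega
  have hnext := cycPayoff_add_mismatch_eq hdev hW (i + 1)
  simp only [cycPayoff, mismatch, add_sub_cancel_right, update_self,
    update_of_ne (Fin.add_one_ne_self_s8 hn i), hc, if_true, if_false] at hnext
  have hnext' : s i = s (i + 1) ∧ c ≠ s (i + 1) := by
    split_ifs at hnext with h₁ h₂ <;> first | omega | exact ⟨h₁, h₂⟩
  exact ⟨hβ, hpred, hnext'.1.symm, hnext'.2.symm⟩

def distToNext (R : Finset (Fin n)) (i : Fin n) : ℕ :=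
  if h : R.Nonempty then R.inf' h fun f => (f - i).val else 0

lemma distToNext_add_one {R : Finset (Fin n)} (hR : R.Nonempty) (hi : i ∉ R) :
    distToNext R (i + 1) + 1 = distToNext R i := by
  have hval : ∀ f ∈ R, (f - (i + 1)).val + 1 = (f - i).val := by
    intro f hf
    have hne : f - i ≠ 0 := sub_ne_zero.mpr (by rintro rfl; exact hi hf)
    rw [← sub_sub, Fin.val_sub_one_of_ne_zero hne]
    exact Nat.sub_add_cancel (Nat.one_le_iff_ne_zero.mpr (Fin.val_ne_zero_iff.mpr hne))
  simp only [distToNext, dif_pos hR]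
  calc R.inf' hR (fun f => (f - (i + 1)).val) + 1
      = R.inf' hR (fun f => (f - (i + 1)).val + 1) :=
        map_finset_inf' (OrderHom.mk (· + 1) fun _ _ h => Nat.add_le_add_right h 1) hR _
    _ = R.inf' hR (fun f => (f - i).val) := inf'_congr hR rfl hval

def boundaryTerm (A : Fin n → Finset C) (β : Fin n → C → ℕ) (s : Fin n → C) (j : Fin n) : ℕ :=
  if s (j - 1) = s j then 0 else distToNext (resisters A β s (s (j - 1))) j + 1

def boundaryPotential (A : Fin n → Finset C) (β : Fin n → C → ℕ) (s : Fin n → C) : ℕ :=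
  ∑ j, boundaryTerm A β s j

lemma boundaryPotential_update_add_one (hn : 2 ≤ n) (hc : c ∈ A i) (hβ : β i c = β i (s i))
    (hpred : s (i - 1) = c) (hci : s i ≠ c) (hnext : s (i + 1) = s i)
    (hR : (resisters A β s c).Nonempty) :
    boundaryPotential A β (update s i c) + 1 = boundaryPotential A β s := by
  have hiR : i ∉ resisters A β s c := by simp [resisters, hc, hβ]
  have hoff : ∀ j ∉ ({i, i + 1} : Finset (Fin n)),
      boundaryTerm A β (update s i c) j = boundaryTerm A β s j := by
    intro j hj
    simp only [mem_insert, mem_singleton, not_or] at hj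
    have hj' : j - 1 ≠ i := fun h => hj.2 (by rw [← h, sub_add_cancel])
    simp [boundaryTerm, update_of_ne hj.1, update_of_ne hj', resisters_update hβ]
  have hsplit := sum_add_sum_eq_of_eq_off _ hoff
  rw [sum_pair (Fin.add_one_ne_self_s8 hn i).symm, sum_pair (Fin.add_one_ne_self_s8 hn i).symm]
    at hsplit
  have hu_i : boundaryTerm A β (update s i c) i = 0 := by
    simp [boundaryTerm, Fin.sub_one_ne_self_s8 hn i, hpred]
  have hu_next : boundaryTerm A β (update s i c) (i + 1) =
      distToNext (resisters A β s c) (i + 1) + 1 := by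
    simp [boundaryTerm, update_of_ne (Fin.add_one_ne_self_s8 hn i), hnext, hci.symm,
      resisters_update hβ]
  have hs_i : boundaryTerm A β s i = distToNext (resisters A β s c) i + 1 := by
    simp [boundaryTerm, hpred, hci.symm]
  have hs_next : boundaryTerm A β s (i + 1) = 0 := by simp [boundaryTerm, hnext]
  have := distToNext_add_one hR hiR
  unfold boundaryPotential
  omega

lemma welfare_le_totalBonus_add (β : Fin n → C → ℕ) (s : Fin n → C) :
    welfare β s ≤ totalBonus β s + n := by
  calc welfare β s ≤ ∑ i, (β i (s i) + 1) := sum_le_sum fun i _ => cycPayoff_le β s i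
    _ = totalBonus β s + n := by simp [totalBonus, sum_add_distrib]

def rank (A : Fin n → Finset C) (β : Fin n → C → ℕ) (s : Fin n → C) : ℕ ×ₗ ℕ ×ₗ ℕ :=
  toLex (∑ i, (A i).sup (β i) + n - welfare β s,
    toLex (∑ i, (A i).sup (β i) - totalBonus β s, boundaryPotential A β s))

lemma welfare_le_and_totalBonus_le_of_reflTransGen (h : ReflTransGen (ImprovementStep A β) s t) :
    welfare β s ≤ welfare β t ∧ totalBonus β s ≤ totalBonus β t := by
  induction h with
  | refl => exact ⟨le_rfl, le_rfl⟩
  | tail _ hstep ih =>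
    exact ⟨ih.1.trans (welfare_le_of_profDev hstep.2),
      ih.2.trans (totalBonus_le_of_profDev hstep.2)⟩

lemma rank_lt_of_reflTransGen (h : ReflTransGen (ImprovementStep A β) s t) (ht : Valid A t)
    (hlt : welfare β s < welfare β t ∨ totalBonus β s < totalBonus β t ∨
      boundaryPotential A β t < boundaryPotential A β s) :
    rank A β t < rank A β s := by
  obtain ⟨hW, hB⟩ := welfare_le_and_totalBonus_le_of_reflTransGen h
  have := totalBonus_le_sum_sup (β := β) ht
  have := welfare_le_totalBonus_add β t
  simp only [rank, Prod.Lex.toLex_lt_toLex]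
  omega

lemma exists_reflTransGen_of_resisters_eq_empty (hn : 2 ≤ n) (hs : Valid A s)
    (hR : resisters A β s c = ∅) (hpred : s (i - 1) = c) (hi : s i ≠ c) :
    ∃ t, Valid A t ∧ ReflTransGen (ImprovementStep A β) s t ∧
      (welfare β s < welfare β t ∨ totalBonus β s < totalBonus β t) := by
  induction hk : #{j | s j ≠ c} using Nat.strong_induction_on generalizing s i with
  | _ k ih =>
  have hfree : c ∈ A i ∧ β i (s i) ≤ β i c := by
    simpa [resisters] using (hR ▸ notMem_empty i : i ∉ resisters A β s c)
  have hlt := cycPayoff_lt_update_of_grab hn hpred hi hfree.2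
  have hstep : ImprovementStep A β s (update s i c) :=
    ⟨valid_update hs hfree.1, profDev_update hi hlt⟩
  have hW := welfare_le_of_profDev hstep.2
  have hB := totalBonus_le_of_profDev hstep.2
  by_cases hgain : welfare β s < welfare β (update s i c) ∨
      totalBonus β s < totalBonus β (update s i c)
  · exact ⟨_, hstep.1, .single hstep, hgain⟩
  obtain ⟨hβ, -, hnext, hnextc⟩ := flat_update_spec hn hi hlt (by omega) (by omega)
  have hcount : #{j | update s i c j ≠ c} < k := by
    have : ({j | update s i c j ≠ c} : Finset (Fin n)) = ({j | s j ≠ c} : Finset _).erase i := by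
      ext j
      by_cases hj : j = i <;> simp [hj]
    rw [this, card_erase_of_mem (by simpa using hi), ← hk]
    exact Nat.sub_lt (card_pos.mpr ⟨i, by simpa using hi⟩) one_pos
  obtain ⟨t, ht, hpath, hgain⟩ := ih _ hcount hstep.1 (by rw [resisters_update hβ, hR])
    (i := i + 1) (by simp) (by simpa [update_of_ne (Fin.add_one_ne_self_s8 hn i)] using hnextc) rfl
  exact ⟨t, ht, hpath.head hstep, by omega⟩

lemma exists_rank_lt_of_update (hn : 2 ≤ n) (hs : Valid A s) (hc : c ∈ A i) (hci : s i ≠ c)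
    (hlt : cycPayoff β s i < cycPayoff β (update s i c) i) :
    ∃ t, Valid A t ∧ ReflTransGen (ImprovementStep A β) s t ∧ rank A β t < rank A β s := by
  have hstep : ImprovementStep A β s (update s i c) := ⟨valid_update hs hc, profDev_update hci hlt⟩
  by_cases hgain : welfare β s < welfare β (update s i c) ∨
      totalBonus β s < totalBonus β (update s i c)
  · exact ⟨_, hstep.1, .single hstep,
      rank_lt_of_reflTransGen (.single hstep) hstep.1 (hgain.imp_right Or.inl)⟩
  have hW := welfare_le_of_profDev hstep.2
  have hB := totalBonus_le_of_profDev hstep.2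
  obtain ⟨hβ, hpred, hnext, -⟩ := flat_update_spec hn hci hlt (by omega) (by omega)
  rcases (resisters A β s c).eq_empty_or_nonempty with hR | hR
  · obtain ⟨t, ht, hpath, hgain'⟩ := exists_reflTransGen_of_resisters_eq_empty hn hs hR hpred hci
    exact ⟨t, ht, hpath, rank_lt_of_reflTransGen hpath ht (hgain'.imp_right Or.inl)⟩
  · have := boundaryPotential_update_add_one hn hc hβ hpred hci hnext hR
    exact ⟨_, hstep.1, .single hstep,
      rank_lt_of_reflTransGen (.single hstep) hstep.1 (Or.inr (Or.inr (by omega)))⟩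

lemma exists_rank_lt_of_not_strongEq (hn : 2 ≤ n) (hs : Valid A s)
    (hse : ¬ StrongEq A (cycPayoff β) s) :
    ∃ t, Valid A t ∧ ReflTransGen (ImprovementStep A β) s t ∧ rank A β t < rank A β s := by
  obtain ⟨s', hs', hdev⟩ : ∃ s', Valid A s' ∧ ProfDev (cycPayoff β) s s' := by
    simpa [StrongEq] using hse
  by_cases hall : ∀ j, s j ≠ s' j
  · have hW : welfare β s < welfare β s' :=
      sum_lt_sum_of_nonempty univ_nonempty fun j _ => hdev.2 j (hall j)
    have hstep : ImprovementStep A β s s' := ⟨hs', hdev⟩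
    exact ⟨s', hs', .single hstep, rank_lt_of_reflTransGen (.single hstep) hs' (.inl hW)⟩
  obtain ⟨j, hj⟩ := not_forall_not.mp hall
  obtain ⟨a, ha⟩ := Function.ne_iff.mp hdev.1
  obtain ⟨i, hi, hpred⟩ := Fin.exists_and_not_sub_one (P := fun k => s k ≠ s' k) ha (not_not.mpr hj)
  refine exists_rank_lt_of_update hn hs (hs' i) hi ?_
  rw [cycPayoff_update_of_sub_one_eq hn (not_not.mp hpred)]
  exact hdev.2 i hi

end CycleGame

theorem cycle_c_weakly_acyclic_general {n : ℕ} [NeZero n] (hn : 2 ≤ n)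
    {C : Type} [DecidableEq C]
    (A : Fin n → Finset C)
    (β : Fin n → C → ℕ)
    (s : Fin n → C) (hs : Valid A s) :
    ∃ t, Relation.ReflTransGen
        (fun u v => Valid A v ∧ ProfDev (cycPayoff β) u v) s t ∧
      StrongEq A (cycPayoff β) t := by
  induction s using (InvImage.wf (rank A β) wellFounded_lt).induction with
  | _ s ih =>
  by_cases hse : StrongEq A (cycPayoff β) s
  · exact ⟨s, .refl, hse⟩
  obtain ⟨u, hu, hsu, hlt⟩ := exists_rank_lt_of_not_strongEq hn hs hse
  obtain ⟨t, hut, ht⟩ := ih u hlt hu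
  exact ⟨t, hsu.trans hut, ht⟩

/-- Every coordination game with bonuses on a simple directed cycle is
coalitionally weakly acyclic: from every initial valid colouring there is a
finite coalitional improvement path (each step a profitable deviation of some
coalition, through valid colourings) ending in a strong equilibrium. In
particular, every such game has a strong equilibrium. -/
theorem cycle_c_weakly_acyclic {n : ℕ} [NeZero n] (hn : 2 ≤ n)
    {C : Type} [DecidableEq C]
    (A : Fin n → Finset C) (hA : ∀ i, (A i).Nonempty)
    (β : Fin n → C → ℕ)
    (s : Fin n → C) (hs : Valid A s) :
    ∃ t, Relation.ReflTransGen
        (fun u v => Valid A v ∧ ProfDev (cycPayoff β) u v) s t ∧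
      StrongEq A (cycPayoff β) t :=
  cycle_c_weakly_acyclic_general hn A β s hs
end

section
/- In the gadget coordination game D(x,y,z) (for any parameters x,y,z ∈ {⊤,⊥} added as extra colours to nodes A, B, C respectively of the 9-node no-Nash-equilibrium game, with the weight-2 edges from the degree-one nodes), in every Nash equilibrium — and hence there is none — no node among A, B, C chooses ⊤ or ⊥; more precisely, each of A, B, C can always secure payoff 2 by choosing an appropriate colour, so choosing ⊤ or ⊥ (yielding payoff at most 0 from within the gadget) is never a best response within the gadget, and the gadget game itself has no Nash equilibrium. -/
open Finset

/-- Colours of the gadget: `Sum.inl 0 = R`, `Sum.inl 1 = G`, `Sum.inl 2 = B`,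
and `Sum.inr tt / Sum.inr ff` are the two extra colours `⊤ / ⊥`. -/
abbrev GCol := Fin 3 ⊕ Bool

/-- Edge weights of the gadget `D(x,y,z)`: nodes `0,1,2` are `A,B,C`; nodes
`3,4,5` are the intermediate nodes with colour sets `{R,G}, {R,B}, {G,B}`;
nodes `6,7,8` are the fixed-colour nodes `{R}, {B}, {G}`. Internal cycle edges
have weight `1`, the edges from the intermediate and fixed nodes weight `2`. -/
def w13 (j i : Fin 9) : ℕ :=
  if (j, i) ∈ ([(0, 1), (1, 2), (2, 0), (0, 3), (1, 4), (2, 5)] :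
      List (Fin 9 × Fin 9)) then 1
  else if (j, i) ∈ ([(3, 1), (4, 2), (5, 0), (6, 0), (7, 1), (8, 2)] :
      List (Fin 9 × Fin 9)) then 2
  else 0

/-- Colour sets of the gadget `D(x,y,z)`: the distinguished nodes `A, B, C`
(nodes `0,1,2`) have the extra colours `x, y, z ∈ {⊤,⊥}` respectively, which
match no neighbour's colours. -/
def A13 (x y z : Bool) : Fin 9 → Finset GCol :=
  ![{Sum.inl 0, Sum.inl 1, Sum.inr x}, {Sum.inl 0, Sum.inl 2, Sum.inr y},
    {Sum.inl 1, Sum.inl 2, Sum.inr z}, {Sum.inl 0, Sum.inl 1},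
    {Sum.inl 0, Sum.inl 2}, {Sum.inl 1, Sum.inl 2},
    {Sum.inl 0}, {Sum.inl 2}, {Sum.inl 1}]

/-- Weighted payoff of node `i`: the sum of the weights of the edges `j → i`
with `s j = s i`. -/
def payoff13 (s : Fin 9 → GCol) (i : Fin 9) : ℕ :=
  ∑ j, if s j = s i then w13 j i else 0

lemma pay0 (s : Fin 9 → GCol) : payoff13 s 0 =
    (if s 2 = s 0 then 1 else 0) + ((if s 5 = s 0 then 2 else 0) + (if s 6 = s 0 then 2 else 0)) := by
  simp (config := { decide := true }) [payoff13, Fin.sum_univ_succ, w13,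
    show ((Fin.succ 2).succ.succ : Fin 9) = 5 from rfl,
    show ((Fin.succ 2).succ.succ.succ : Fin 9) = 6 from rfl,
    show (Fin.succ 2 : Fin 9) = 3 from rfl]

lemma pay1 (s : Fin 9 → GCol) : payoff13 s 1 =
    (if s 0 = s 1 then 1 else 0) + ((if s 3 = s 1 then 2 else 0) + (if s 7 = s 1 then 2 else 0)) := by
  simp (config := { decide := true }) [payoff13, Fin.sum_univ_succ, w13,
    show ((Fin.succ 2).succ.succ : Fin 9) = 5 from rfl,
    show ((Fin.succ 2).succ.succ.succ : Fin 9) = 6 from rfl,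
    show ((Fin.succ 2).succ.succ.succ.succ : Fin 9) = 7 from rfl,
    show ((Fin.succ 2).succ : Fin 9) = 4 from rfl,
    show (Fin.succ 2 : Fin 9) = 3 from rfl]

lemma pay2 (s : Fin 9 → GCol) : payoff13 s 2 =
    (if s 1 = s 2 then 1 else 0) + ((if s 4 = s 2 then 2 else 0) + (if s 8 = s 2 then 2 else 0)) := by
  simp (config := { decide := true }) [payoff13, Fin.sum_univ_succ, w13,
    show ((Fin.succ 2).succ.succ.succ.succ.succ : Fin 9) = 8 from rfl,
    show ((Fin.succ 2).succ : Fin 9) = 4 from rfl,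
    show (Fin.succ 2 : Fin 9) = 3 from rfl]

def base13 : Fin 9 → Finset GCol :=
  ![{Sum.inl 0, Sum.inl 1}, {Sum.inl 0, Sum.inl 2}, {Sum.inl 1, Sum.inl 2},
    {Sum.inl 0, Sum.inl 1}, {Sum.inl 0, Sum.inl 2}, {Sum.inl 1, Sum.inl 2},
    {Sum.inl 0}, {Sum.inl 2}, {Sum.inl 1}]

lemma core13 : ∀ t : (∀ i : Fin 9, {c // c ∈ base13 i}),
    ∃ i : Fin 9, ∃ c ∈ base13 i,
      payoff13 (fun j => (t j).1) i < payoff13 (Function.update (fun j => (t j).1) i c) i := by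
  decide

lemma base_sub (x y z : Bool) : ∀ i, base13 i ⊆ A13 x y z i := by
  intro i a ha
  fin_cases i <;> simp [base13, A13] at ha ⊢ <;> tauto

/-- In the gadget game `D(x,y,z)` (for any parameters `x, y, z ∈ {⊤,⊥}`):
each of the nodes `A, B, C` can always secure payoff `2` by an appropriate
available colour; choosing the extra colour `⊤`/`⊥` always yields payoff at most `1`
(so it is never a best response, and in every Nash equilibrium none of
`A, B, C` chooses `⊤` or `⊥`); and the gadget game has no Nash equilibrium. -/
theorem gadget_no_nash_equilibrium (x y z : Bool) :
    (∀ s : Fin 9 → GCol, (∀ i, s i ∈ A13 x y z i) →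
      ∀ i ∈ ({0, 1, 2} : Finset (Fin 9)),
        ∃ c ∈ A13 x y z i, 2 ≤ payoff13 (Function.update s i c) i) ∧
    (∀ s : Fin 9 → GCol, (∀ i, s i ∈ A13 x y z i) →
      ∀ i ∈ ({0, 1, 2} : Finset (Fin 9)), ∀ b : Bool,
        payoff13 (Function.update s i (Sum.inr b)) i ≤ 1) ∧
    (∀ s : Fin 9 → GCol, (∀ i, s i ∈ A13 x y z i) →
      (∀ i, ∀ c ∈ A13 x y z i,
          payoff13 (Function.update s i c) i ≤ payoff13 s i) →
      ∀ i ∈ ({0, 1, 2} : Finset (Fin 9)), ∀ b : Bool, s i ≠ Sum.inr b) ∧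
    ¬ ∃ s : Fin 9 → GCol, (∀ i, s i ∈ A13 x y z i) ∧
      ∀ i, ∀ c ∈ A13 x y z i,
        payoff13 (Function.update s i c) i ≤ payoff13 s i := by
  have sec : ∀ s : Fin 9 → GCol, (∀ i, s i ∈ A13 x y z i) →
      ∀ i ∈ ({0, 1, 2} : Finset (Fin 9)),
        ∃ c ∈ A13 x y z i, 2 ≤ payoff13 (Function.update s i c) i := by
    intro s hs i hi
    fin_cases hi
    · refine ⟨Sum.inl 0, show _ ∈ ({Sum.inl 0, Sum.inl 1, Sum.inr x} : Finset GCol) by simp, ?_⟩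
      have h6 : s 6 ∈ ({Sum.inl 0} : Finset GCol) := hs 6
      rw [Finset.mem_singleton] at h6
      rw [pay0]
      simp (config := { decide := true }) [Function.update, h6]
      split_ifs <;> omega
    · refine ⟨Sum.inl 2, show _ ∈ ({Sum.inl 0, Sum.inl 2, Sum.inr y} : Finset GCol) by simp, ?_⟩
      have h7 : s 7 ∈ ({Sum.inl 2} : Finset GCol) := hs 7
      rw [Finset.mem_singleton] at h7
      rw [pay1]
      simp (config := { decide := true }) [Function.update, h7]
      split_ifs <;> omega
    · refine ⟨Sum.inl 1, show _ ∈ ({Sum.inl 1, Sum.inl 2, Sum.inr z} : Finset GCol) by simp, ?_⟩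
      have h8 : s 8 ∈ ({Sum.inl 1} : Finset GCol) := hs 8
      rw [Finset.mem_singleton] at h8
      rw [pay2]
      simp (config := { decide := true }) [Function.update, h8]
      split_ifs <;> omega
  have bnd : ∀ s : Fin 9 → GCol, (∀ i, s i ∈ A13 x y z i) →
      ∀ i ∈ ({0, 1, 2} : Finset (Fin 9)), ∀ b : Bool,
        payoff13 (Function.update s i (Sum.inr b)) i ≤ 1 := by
    intro s hs i hi b
    fin_cases hi
    · rw [pay0]
      have h5 : s 5 ∈ ({Sum.inl 1, Sum.inl 2} : Finset GCol) := hs 5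
      have h6 : s 6 ∈ ({Sum.inl 0} : Finset GCol) := hs 6
      simp only [Finset.mem_insert, Finset.mem_singleton] at h5 h6
      simp (config := { decide := true }) [Function.update, h6]
      rcases h5 with h | h <;> simp [h] <;> split_ifs <;> omega
    · rw [pay1]
      have h3 : s 3 ∈ ({Sum.inl 0, Sum.inl 1} : Finset GCol) := hs 3
      have h7 : s 7 ∈ ({Sum.inl 2} : Finset GCol) := hs 7
      simp only [Finset.mem_insert, Finset.mem_singleton] at h3 h7
      simp (config := { decide := true }) [Function.update, h7]
      rcases h3 with h | h <;> simp [h] <;> split_ifs <;> omega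
    · rw [pay2]
      have h4 : s 4 ∈ ({Sum.inl 0, Sum.inl 2} : Finset GCol) := hs 4
      have h8 : s 8 ∈ ({Sum.inl 1} : Finset GCol) := hs 8
      simp only [Finset.mem_insert, Finset.mem_singleton] at h4 h8
      simp (config := { decide := true }) [Function.update, h8]
      rcases h4 with h | h <;> simp [h] <;> split_ifs <;> omega
  have part3 : ∀ s : Fin 9 → GCol, (∀ i, s i ∈ A13 x y z i) →
      (∀ i, ∀ c ∈ A13 x y z i,
          payoff13 (Function.update s i c) i ≤ payoff13 s i) →
      ∀ i ∈ ({0, 1, 2} : Finset (Fin 9)), ∀ b : Bool, s i ≠ Sum.inr b := by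
    intro s hs hne i hi b hb
    obtain ⟨c, hc, h2c⟩ := sec s hs i hi
    have h2 := bnd s hs i hi b
    have heq : Function.update s i (Sum.inr b) = s := by
      rw [← hb]; exact Function.update_eq_self i s
    rw [heq] at h2
    have := hne i c hc
    omega
  refine ⟨sec, bnd, part3, ?_⟩
  rintro ⟨s, hs, hne⟩
  have h3 := part3 s hs hne
  have hb : ∀ i, s i ∈ base13 i := by
    intro i
    fin_cases i
    · have h : s 0 ∈ ({Sum.inl 0, Sum.inl 1, Sum.inr x} : Finset GCol) := hs 0
      simp only [Finset.mem_insert, Finset.mem_singleton] at h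
      show s 0 ∈ ({Sum.inl 0, Sum.inl 1} : Finset GCol)
      simp only [Finset.mem_insert, Finset.mem_singleton]
      rcases h with h | h | h
      exacts [Or.inl h, Or.inr h, absurd h (h3 0 (by decide) x)]
    · have h : s 1 ∈ ({Sum.inl 0, Sum.inl 2, Sum.inr y} : Finset GCol) := hs 1
      simp only [Finset.mem_insert, Finset.mem_singleton] at h
      show s 1 ∈ ({Sum.inl 0, Sum.inl 2} : Finset GCol)
      simp only [Finset.mem_insert, Finset.mem_singleton]
      rcases h with h | h | h
      exacts [Or.inl h, Or.inr h, absurd h (h3 1 (by decide) y)]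
    · have h : s 2 ∈ ({Sum.inl 1, Sum.inl 2, Sum.inr z} : Finset GCol) := hs 2
      simp only [Finset.mem_insert, Finset.mem_singleton] at h
      show s 2 ∈ ({Sum.inl 1, Sum.inl 2} : Finset GCol)
      simp only [Finset.mem_insert, Finset.mem_singleton]
      rcases h with h | h | h
      exacts [Or.inl h, Or.inr h, absurd h (h3 2 (by decide) z)]
    · exact hs 3
    · exact hs 4
    · exact hs 5
    · exact hs 6
    · exact hs 7
    · exact hs 8
  obtain ⟨i, c, hc, hlt⟩ := core13 (fun i => ⟨s i, hb i⟩)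
  have hfun : (fun j => ((fun i => (⟨s i, hb i⟩ : {c // c ∈ base13 i})) j).1) = s := rfl
  rw [hfun] at hlt
  have := hne i c (base_sub x y z i hc)
  omega
end

section
/- Any weighted coordination game with natural-number edge weights can be simulated by an unweighted coordination game: replacing each edge i → j of weight w by w fresh intermediate nodes i_1,...,i_w with colour set equal to A(i) and unweighted edges i → i_k and i_k → j for each k yields a game in which: (a) every Nash equilibrium of the weighted game extends (by assigning each i_k the colour of i) to a Nash equilibrium of the unweighted game with identical payoffs for original players, and (b) the restriction of any Nash equilibrium of the unweighted game to the original nodes is a Nash equilibrium of the weighted game. -/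
open Finset

/-- Nodes of the unweighted simulation of a weighted coordination game:
the original nodes (`Sum.inl`), plus, for each ordered pair `(i, j)`,
`w i j` fresh intermediate nodes (`Sum.inr ⟨(i, j), k⟩`). -/
abbrev SimV (n : ℕ) (w : Fin n → Fin n → ℕ) : Type :=
  Fin n ⊕ (Σ p : Fin n × Fin n, Fin (w p.1 p.2))

/-- Edges of the simulation: each weighted edge `i → j` is replaced by the
unweighted edges `i → iₖ` and `iₖ → j` through the intermediate nodes
`iₖ = ⟨(i, j), k⟩`, `k < w i j`. -/
def simEdge {n : ℕ} {w : Fin n → Fin n → ℕ} : SimV n w → SimV n w → Bool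
  | Sum.inl i, Sum.inr ⟨(i', _), _⟩ => i == i'
  | Sum.inr ⟨(_, j'), _⟩, Sum.inl j => j' == j
  | _, _ => false

/-- Colour sets of the simulation: each intermediate node `⟨(i, j), k⟩` gets
the colour set of the original node `i`. -/
def simA {n : ℕ} {w : Fin n → Fin n → ℕ} {C : Type}
    (A : Fin n → Finset C) : SimV n w → Finset C
  | Sum.inl i => A i
  | Sum.inr ⟨(i, _), _⟩ => A i

/-- The extension of a colouring of the original nodes to the simulation,
assigning to each intermediate node `⟨(i, j), k⟩` the colour of `i`. -/
def simExt {n : ℕ} {w : Fin n → Fin n → ℕ} {C : Type}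
    (s : Fin n → C) : SimV n w → C
  | Sum.inl i => s i
  | Sum.inr ⟨(i, _), _⟩ => s i

/-- Payoff in the weighted coordination game: the total weight of the edges
from in-neighbours that chose `i`'s colour. -/
def wPayoff {n : ℕ} {C : Type} [DecidableEq C] (w : Fin n → Fin n → ℕ)
    (s : Fin n → C) (i : Fin n) : ℕ :=
  ∑ j, if s j = s i then w j i else 0

/-- Payoff in the unweighted simulation: the number of in-neighbours that
chose the same colour. -/
def uPayoff {n : ℕ} {w : Fin n → Fin n → ℕ} {C : Type} [DecidableEq C]
    (t : SimV n w → C) (v : SimV n w) : ℕ :=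
  (univ.filter (fun u => simEdge u v = true ∧ t u = t v)).card

lemma uPayoff_inl {n : ℕ} {w : Fin n → Fin n → ℕ} {C : Type} [DecidableEq C]
    (t : SimV n w → C) (j : Fin n) :
    uPayoff t (Sum.inl j) =
      ∑ i, ∑ k : Fin (w i j), if t (Sum.inr ⟨(i, j), k⟩) = t (Sum.inl j) then 1 else 0 := by
  unfold uPayoff
  rw [Finset.card_filter, Fintype.sum_sum_type]
  rw [← Finset.univ_sigma_univ, Finset.sum_sigma]
  simp only [simEdge]
  rw [Fintype.sum_prod_type]
  simp only [Finset.sum_const_zero, if_false, beq_iff_eq]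
  rw [Finset.sum_eq_zero (fun i _ => by simp [simEdge]), zero_add]
  refine Finset.sum_congr rfl fun i _ => ?_
  rw [Finset.sum_eq_single j]
  · refine Finset.sum_congr rfl fun k _ => by simp
  · intro j' _ hj'
    exact Finset.sum_eq_zero fun k _ => by simp [hj']
  · simp

lemma uPayoff_inr {n : ℕ} {w : Fin n → Fin n → ℕ} {C : Type} [DecidableEq C]
    (t : SimV n w → C) (i j : Fin n) (k : Fin (w i j)) :
    uPayoff t (Sum.inr ⟨(i, j), k⟩) =
      if t (Sum.inl i) = t (Sum.inr ⟨(i, j), k⟩) then 1 else 0 := by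
  unfold uPayoff
  rw [Finset.card_filter, Fintype.sum_sum_type]
  rw [Finset.sum_eq_zero (s := univ) (f := fun x : (Σ p : Fin n × Fin n, Fin (w p.1 p.2)) =>
      if simEdge (Sum.inr x) (Sum.inr ⟨(i, j), k⟩) = true ∧ t (Sum.inr x) = t (Sum.inr ⟨(i,j),k⟩) then 1 else 0)
      (fun x _ => by rcases x with ⟨⟨a,b⟩,c⟩; simp [simEdge]), add_zero]
  rw [Finset.sum_eq_single i]
  · simp [simEdge]
  · intro i' _ hi'; simp [simEdge, hi']
  · simp

lemma sum_const_if (m : ℕ) (P : Prop) [Decidable P] :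
    (∑ _k : Fin m, if P then 1 else 0) = if P then m else 0 := by
  split <;> simp

lemma key_sum {n : ℕ} {C : Type} [DecidableEq C] (w : Fin n → Fin n → ℕ)
    (hloop : ∀ i, w i i = 0) (s : Fin n → C) (j : Fin n) (c : C) :
    (∑ i, if s i = c then w i j else 0) = wPayoff w (Function.update s j c) j := by
  unfold wPayoff
  refine Finset.sum_congr rfl fun i _ => ?_
  rcases eq_or_ne i j with rfl | hij
  · simp [hloop]
  · simp [Function.update_of_ne hij, Function.update_self]

/-- Any weighted coordination game with natural-number edge weights is
simulated by the unweighted coordination game obtained by replacing each edge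
`i → j` of weight `w i j` by `w i j` intermediate nodes with colour set
`A i`: (a) every Nash equilibrium `s` of the weighted game extends (by giving
each intermediate node `⟨(i, j), k⟩` the colour of `i`) to a valid Nash
equilibrium of the unweighted game in which every original player gets the
same payoff as before, and (b) the restriction to the original nodes of any
Nash equilibrium of the unweighted game is a Nash equilibrium of the weighted
game. -/
theorem weighted_simulated_by_unweighted {n : ℕ} {C : Type} [DecidableEq C]
    (w : Fin n → Fin n → ℕ) (hloop : ∀ i, w i i = 0)
    (A : Fin n → Finset C) (hA : ∀ i, (A i).Nonempty) :
    ((∀ s : Fin n → C, (∀ i, s i ∈ A i) →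
      (∀ i, ∀ c ∈ A i, wPayoff w (Function.update s i c) i ≤ wPayoff w s i) →
      (∀ v, simExt (w := w) s v ∈ simA A v) ∧
      (∀ v, ∀ c ∈ simA (w := w) A v,
        uPayoff (Function.update (simExt s) v c) v ≤ uPayoff (simExt s) v) ∧
      (∀ i, uPayoff (simExt (w := w) s) (Sum.inl i) = wPayoff w s i)) ∧
    (∀ t : SimV n w → C, (∀ v, t v ∈ simA A v) →
      (∀ v, ∀ c ∈ simA A v,
        uPayoff (Function.update t v c) v ≤ uPayoff t v) →
      ∀ i, ∀ c ∈ A i,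
        wPayoff w (Function.update (fun j => t (Sum.inl j)) i c) i ≤
          wPayoff w (fun j => t (Sum.inl j)) i)) := by
  constructor
  · intro s hs hNE
    have hpay : ∀ j, uPayoff (simExt (w := w) s) (Sum.inl j) = wPayoff w s j := by
      intro j
      rw [uPayoff_inl]
      unfold wPayoff
      refine Finset.sum_congr rfl fun i _ => ?_
      simp only [simExt]; exact sum_const_if (w i j) (s i = s j)
    refine ⟨?_, ?_, hpay⟩
    · rintro (i | ⟨⟨i, j⟩, k⟩)
      · exact hs i
      · exact hs i
    · rintro (j | ⟨⟨i, j⟩, k⟩) c hc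
      · rw [hpay j, uPayoff_inl]
        have h1 : ∀ i (k : Fin (w i j)),
            Function.update (simExt (w := w) s) (Sum.inl j) c (Sum.inr ⟨(i, j), k⟩) = s i := by
          intro i k
          rw [Function.update_of_ne (by simp)]; rfl
        calc (∑ i, ∑ k : Fin (w i j),
              if Function.update (simExt (w := w) s) (Sum.inl j) c (Sum.inr ⟨(i, j), k⟩) =
                Function.update (simExt (w := w) s) (Sum.inl j) c (Sum.inl j) then 1 else 0)
            = ∑ i, if s i = c then w i j else 0 := by
              refine Finset.sum_congr rfl fun i _ => ?_
              simp only [h1, Function.update_self, sum_const_if]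
          _ = wPayoff w (Function.update s j c) j := key_sum w hloop s j c
          _ ≤ wPayoff w s j := hNE j c hc
      · rw [uPayoff_inr, uPayoff_inr]
        have : simExt (w := w) s (Sum.inl i) = simExt (w := w) s (Sum.inr ⟨(i, j), k⟩) := rfl
        rw [if_pos this]
        split <;> omega
  · intro t ht hNE
    have hcopy : ∀ i j (k : Fin (w i j)), t (Sum.inr ⟨(i, j), k⟩) = t (Sum.inl i) := by
      intro i j k
      have hc : t (Sum.inl i) ∈ simA (w := w) A (Sum.inr ⟨(i, j), k⟩) := ht (Sum.inl i)
      have h := hNE (Sum.inr ⟨(i, j), k⟩) (t (Sum.inl i)) hc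
      rw [uPayoff_inr, uPayoff_inr] at h
      rw [Function.update_of_ne (by simp), Function.update_self, if_pos rfl] at h
      by_contra hne
      rw [if_neg (Ne.symm hne)] at h
      omega
    intro i c hc
    set s : Fin n → C := fun j => t (Sum.inl j) with hsdef
    have h := hNE (Sum.inl i) c (by exact hc)
    rw [uPayoff_inl, uPayoff_inl] at h
    have hL : (∑ a, ∑ k : Fin (w a i),
        if Function.update t (Sum.inl i) c (Sum.inr ⟨(a, i), k⟩) =
          Function.update t (Sum.inl i) c (Sum.inl i) then 1 else 0) =
        wPayoff w (Function.update s i c) i := by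
      rw [← key_sum w hloop s i c]
      refine Finset.sum_congr rfl fun a _ => ?_
      have e1 : ∀ k : Fin (w a i),
          (if Function.update t (Sum.inl i) c (Sum.inr ⟨(a, i), k⟩) =
            Function.update t (Sum.inl i) c (Sum.inl i) then (1:ℕ) else 0) =
          (if s a = c then 1 else 0) := by
        intro k
        rw [Function.update_of_ne (by simp), Function.update_self, hcopy]
      rw [Finset.sum_congr rfl fun k _ => e1 k, sum_const_if]
    have hR : (∑ a, ∑ k : Fin (w a i),
        if t (Sum.inr ⟨(a, i), k⟩) = t (Sum.inl i) then 1 else 0) = wPayoff w s i := by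
      unfold wPayoff
      refine Finset.sum_congr rfl fun a _ => ?_
      have e1 : ∀ k : Fin (w a i),
          (if t (Sum.inr ⟨(a, i), k⟩) = t (Sum.inl i) then (1:ℕ) else 0) =
          (if s a = s i then 1 else 0) := by
        intro k; rw [hcopy]
      rw [Finset.sum_congr rfl fun k _ => e1 k, sum_const_if]
    rw [hL, hR] at h
    exact h
end

section
/- In a coordination game with bonuses on a simple directed cycle, in every Nash equilibrium each player's payoff is at least the maximum bonus available to her, i.e., p_i(s) ≥ max_{c ∈ A(i)} β(i, c); consequently, a Nash equilibrium s fails to be a strong equilibrium only if there is a joint strategy giving every player the payoff max_{c ∈ A(i)} β(i, c) + 1, which requires all players to choose one common colour that has maximal bonus for every player. -/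
open Finset

/-!
A player can always switch to a colour of maximal bonus, so in a Nash equilibrium her payoff is
at least that bonus, and a strict improvement can only reach the largest possible payoff,
maximal bonus plus one: the improving player picks a colour of maximal bonus that her predecessor
also picks. Had the predecessor kept her old strategy, the player could have made this move
alone, contradicting the equilibrium; so deviating propagates backwards around the cycle, every
player deviates, and each one copies her predecessor, which makes the deviation constant.
-/

namespace Fin

open Fin.NatCast Fin.CommRing

theorem forall_of_imp_sub_one {n : ℕ} [NeZero n] {P : Fin n → Prop}
    (h : ∀ i, P i → P (i - 1)) (a : Fin n) (ha : P a) (b : Fin n) : P b := by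
  have hsub : ∀ m : ℕ, P (a - m) := by
    intro m
    induction m with
    | zero => simpa using ha
    | succ k ih =>
      rw [Nat.cast_succ, ← sub_sub]
      exact h _ ih
  simpa using hsub (a - b : Fin n)

end Fin

section CycleGame

variable {n : ℕ} [NeZero n] {C : Type} [DecidableEq C] {A : Fin n → Finset C}
  {β : Fin n → C → ℕ}

theorem le_cycPayoff_update (s : Fin n → C) (i : Fin n) (c : C) :
    β i c ≤ cycPayoff β (Function.update s i c) i := by
  unfold cycPayoff
  rw [Function.update_self]
  exact Nat.le_add_right _ _

theorem cycPayoff_le_sup_add_one {t : Fin n → C} {i : Fin n} (hti : t i ∈ A i) :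
    cycPayoff β t i ≤ (A i).sup (β i) + 1 := by
  unfold cycPayoff
  have := le_sup (f := β i) hti
  split <;> omega

theorem cycPayoff_eq_sup_add_one_iff {t : Fin n → C} {i : Fin n} (hti : t i ∈ A i) :
    cycPayoff β t i = (A i).sup (β i) + 1 ↔ t (i - 1) = t i ∧ β i (t i) = (A i).sup (β i) := by
  unfold cycPayoff
  have := le_sup (f := β i) hti
  split_ifs with h
  · simp only [h, true_and, Nat.add_right_cancel_iff]
  · simp only [h, false_and, iff_false]
    omega

theorem NashEq.sup_le_cycPayoff {s : Fin n → C} (hnash : NashEq A (cycPayoff β) s)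
    (i : Fin n) : (A i).sup (β i) ≤ cycPayoff β s i :=
  Finset.sup_le fun c hc => (le_cycPayoff_update s i c).trans (hnash i c hc)

theorem NashEq.cycPayoff_eq_sup_add_one_of_lt {s t : Fin n → C}
    (hnash : NashEq A (cycPayoff β) s) (ht : Valid A t) {i : Fin n}
    (hlt : cycPayoff β s i < cycPayoff β t i) :
    cycPayoff β t i = (A i).sup (β i) + 1 := by
  have := hnash.sup_le_cycPayoff i
  have := cycPayoff_le_sup_add_one (β := β) (ht i)
  omega

/-- Were `s (i - 1) = c`, switching to `c` alone would give player `i` the maximal payoff. -/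
theorem NashEq.apply_sub_one_ne {s : Fin n → C} (hnash : NashEq A (cycPayoff β) s)
    (hs : Valid A s) {i : Fin n} {c : C} (hc : c ∈ A i) (hβ : β i c = (A i).sup (β i))
    (hsi : s i ≠ c) : s (i - 1) ≠ c := by
  by_cases hpred : i - 1 = i
  · rwa [hpred]
  intro hsc
  have hdev := hnash i c hc
  have hbonus := le_sup (f := β i) (hs i)
  unfold cycPayoff at hdev
  rw [Function.update_self, Function.update_of_ne hpred, if_pos hsc,
    if_neg (hsc ▸ Ne.symm hsi)] at hdev
  omega

end CycleGame

theorem cycle_nash_payoff_and_strong_failure_general {n : ℕ} [NeZero n]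
    {C : Type} [DecidableEq C]
    (A : Fin n → Finset C)
    (β : Fin n → C → ℕ)
    (s : Fin n → C) (hs : Valid A s) (hnash : NashEq A (cycPayoff β) s) :
    (∀ i, (A i).sup (β i) ≤ cycPayoff β s i) ∧
    (¬ StrongEq A (cycPayoff β) s →
      ∃ (t : Fin n → C) (c : C), Valid A t ∧ (∀ i, t i = c) ∧
        (∀ i, c ∈ A i ∧ β i c = (A i).sup (β i)) ∧
        (∀ i, cycPayoff β t i = (A i).sup (β i) + 1)) := by
  refine ⟨hnash.sup_le_cycPayoff, fun hns => ?_⟩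
  simp only [StrongEq, not_forall, not_not] at hns
  obtain ⟨t, ht, hne, hdev⟩ := hns
  have hmax : ∀ i, s i ≠ t i → cycPayoff β t i = (A i).sup (β i) + 1 := fun i hi =>
    hnash.cycPayoff_eq_sup_add_one_of_lt ht (hdev i hi)
  have hcopy : ∀ i, s i ≠ t i → t (i - 1) = t i ∧ β i (t i) = (A i).sup (β i) := fun i hi =>
    (cycPayoff_eq_sup_add_one_iff (ht i)).mp (hmax i hi)
  obtain ⟨i₀, hi₀⟩ := Function.ne_iff.mp hne
  have hall : ∀ i, s i ≠ t i := Fin.forall_of_imp_sub_one (fun i hi => by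
    rw [(hcopy i hi).1]
    exact hnash.apply_sub_one_ne hs (ht i) (hcopy i hi).2 hi) i₀ hi₀
  have hconst : ∀ i, t i = t 0 :=
    Fin.forall_of_imp_sub_one (P := fun i => t i = t 0)
      (fun i hi => (hcopy i (hall i)).1.trans hi) 0 rfl
  refine ⟨t, t 0, ht, hconst, fun i => ?_, fun i => hmax i (hall i)⟩
  rw [← hconst i]
  exact ⟨ht i, (hcopy i (hall i)).2⟩

/-- In a coordination game with bonuses on a simple directed cycle, in every
Nash equilibrium each player's payoff is at least the maximum bonus available
to her. Consequently a Nash equilibrium `s` fails to be a strong equilibrium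
only if there is a (valid) joint strategy giving every player the payoff
`max_{c ∈ A i} β i c + 1`, which requires all players to choose one common
colour that is available to every player and has maximal bonus for every
player. -/
theorem cycle_nash_payoff_and_strong_failure {n : ℕ} [NeZero n] (hn : 2 ≤ n)
    {C : Type} [DecidableEq C]
    (A : Fin n → Finset C) (hA : ∀ i, (A i).Nonempty)
    (β : Fin n → C → ℕ)
    (s : Fin n → C) (hs : Valid A s) (hnash : NashEq A (cycPayoff β) s) :
    (∀ i, (A i).sup (β i) ≤ cycPayoff β s i) ∧
    (¬ StrongEq A (cycPayoff β) s →
      ∃ (t : Fin n → C) (c : C), Valid A t ∧ (∀ i, t i = c) ∧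
        (∀ i, c ∈ A i ∧ β i c = (A i).sup (β i)) ∧
        (∀ i, cycPayoff β t i = (A i).sup (β i) + 1)) :=
  cycle_nash_payoff_and_strong_failure_general A β s hs hnash
end
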